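/- arXiv:1611.06361 — 10 statements merged into one kernel-verified Lean document; each statement's English description precedes it below -/
import Mathlib

section
/- Let q be a prime power with q ≥ 3 and let f be a permutation polynomial of F_q. Then there exist α, β, γ, δ ∈ F_q, with γ and δ not both zero, such that f(c) = (αc + β)/(γc + δ) (in particular γc + δ ≠ 0) holds for at least q − Crk(f) distinct elements c ∈ F_q. -/
open Polynomial Finset

/-- The Carlitz composition `P_n` over a field with `q` elements, built from
the constants `c 0, c 1, …, c (n+1)`:
`P_n(x) = (⋯((c_0 x + c_1)^{q-2} + c_2)^{q-2} ⋯ + c_n)^{q-2} + c_{n+1}`. -/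
def carlitzAux {F : Type*} [Field F] (q : ℕ) (c : ℕ → F) : ℕ → F → F
  | 0 => fun x => c 0 * x + c 1
  | n + 1 => fun x => (carlitzAux q c n x) ^ (q - 2) + c (n + 2)

/-- `f` agrees (as a map) with a Carlitz composition `P_n` with `n` inversions,
where `c 0 ≠ 0` and `c i ≠ 0` for `2 ≤ i ≤ n`. -/
def IsCarlitzForm {F : Type*} [Field F] [Fintype F] (f : F → F) (n : ℕ) : Prop :=
  ∃ c : ℕ → F, c 0 ≠ 0 ∧ (∀ i, 2 ≤ i → i ≤ n → c i ≠ 0) ∧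
    ∀ x, f x = carlitzAux (Fintype.card F) c n x

/-- The Carlitz rank of a map `f`: the smallest `n` such that `f` agrees with a
Carlitz composition `P_n`. -/
noncomputable def carlitzRank {F : Type*} [Field F] [Fintype F] (f : F → F) : ℕ :=
  sInf {n | IsCarlitzForm f n}

/-- `f` is the `r`-th order cyclotomic mapping of index `ℓ` with respect to the
primitive element `ξ` and coefficients `a 0, …, a (ℓ-1)`: it maps `0` to `0` and
`x` to `a i * x ^ r` for `x` in the cyclotomic coset `C_i = ξ^i C_0`, where
`C_0` is the set of nonzero `ℓ`-th powers. -/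
def IsCycMap {F : Type*} [Field F] (ℓ r : ℕ) (ξ : F) (a : ℕ → F) (f : F → F) : Prop :=
  f 0 = 0 ∧ (∀ i < ℓ, a i ≠ 0) ∧
    ∀ i < ℓ, ∀ y : F, y ≠ 0 → f (ξ ^ i * y ^ ℓ) = a i * (ξ ^ i * y ^ ℓ) ^ r

/-- The index `Ind(f)` of a map `f` with `f 0 = 0`: the smallest divisor `ℓ` of
`q - 1` such that `f` is an `r`-th order cyclotomic mapping of index `ℓ` for some
positive `r`, some primitive element `ξ` and some nonzero coefficients. -/
noncomputable def cycIndex {F : Type*} [Field F] [Fintype F] (f : F → F) : ℕ :=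
  sInf {ℓ | ℓ ∣ Fintype.card F - 1 ∧ ∃ r, 1 ≤ r ∧ ∃ ξ : F,
    orderOf ξ = Fintype.card F - 1 ∧ ∃ a : ℕ → F, IsCycMap ℓ r ξ a f}

/-- The linearity `L(f) = max_{a ≠ 0} |{c : f c = a c}|`. -/
def linearity {F : Type*} [Field F] [Fintype F] [DecidableEq F] (f : F → F) : ℕ :=
  (Finset.univ.erase (0 : F)).sup
    (fun a => (Finset.univ.filter (fun c => f c = a * c)).card)

/-- The invertibility `I(f) = max_{c ≠ 0} |{x ≠ 0 : f x = c / x}|`. -/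
def invertibility {F : Type*} [Field F] [Fintype F] [DecidableEq F] (f : F → F) : ℕ :=
  (Finset.univ.erase (0 : F)).sup
    (fun c => ((Finset.univ.erase (0 : F)).filter (fun x => f x = c / x)).card)

/-!
Since `q ≥ 3`, `x ^ (q - 2) = x⁻¹` for every `x` (with `0⁻¹ = 0`), so `P_n` alternates affine
maps with inversion. Inverting a Möbius map `(αx + β)/(γx + δ)` and adding a constant gives
another Möbius map, valid away from the single root of `αx + β`; hence `P_n` agrees with a
Möbius map off at most `n` points. The Carlitz rank is attained because maps with a Carlitz
form are closed under composition and include the transposition `(0 1)`,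
`x ↦ (((1 - x)⁻¹ - 1)⁻¹ + 1)⁻¹`, hence all transpositions and all permutations.
-/

theorem FiniteField.pow_card_sub_two_eq_inv {F : Type*} [Field F] [Fintype F]
    (hq : 3 ≤ Fintype.card F) (y : F) : y ^ (Fintype.card F - 2) = y⁻¹ := by
  rcases eq_or_ne y 0 with rfl | hy
  · rw [inv_zero, zero_pow (by omega)]
  · refine eq_inv_of_mul_eq_one_left ?_
    rw [← pow_succ, show Fintype.card F - 2 + 1 = Fintype.card F - 1 by omega,
      FiniteField.pow_card_sub_one_eq_one y hy]

section Carlitz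

variable {F : Type*} [Field F]

theorem carlitzAux_congr {q : ℕ} {c c' : ℕ → F} {n : ℕ} (h : ∀ i ≤ n + 1, c i = c' i) :
    carlitzAux q c n = carlitzAux q c' n := by
  induction n with
  | zero => funext x; simp only [carlitzAux, h 0 (by omega), h 1 (by omega)]
  | succ m ih =>
    funext x
    simp only [carlitzAux, ih fun i hi => h i (by omega), h (m + 2) (by omega)]

theorem carlitzAux_update_succ_add (q : ℕ) (c : ℕ → F) (n : ℕ) (d x : F) :
    carlitzAux q (Function.update c (n + 1) (c (n + 1) + d)) n x = carlitzAux q c n x + d := by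
  cases n with
  | zero =>
    simp only [carlitzAux, Function.update_self]
    rw [Function.update_of_ne (by omega)]
    ring
  | succ m =>
    simp only [carlitzAux]
    rw [carlitzAux_congr fun i hi => Function.update_of_ne (by omega) _ c, Function.update_self]
    ring

variable [Fintype F]

theorem carlitzAux_succ (hq : 3 ≤ Fintype.card F) (c : ℕ → F) (n : ℕ) (x : F) :
    carlitzAux (Fintype.card F) c (n + 1) x =
      (carlitzAux (Fintype.card F) c n x)⁻¹ + c (n + 2) := by
  simp only [carlitzAux, FiniteField.pow_card_sub_two_eq_inv hq]

def HasCarlitzForm (f : F → F) : Prop := ∃ n, IsCarlitzForm f n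

theorem hasCarlitzForm_affine {a : F} (ha : a ≠ 0) (b : F) : HasCarlitzForm fun x => a * x + b :=
  ⟨0, fun i => if i = 0 then a else b, by simpa using ha, by omega, fun x => by simp [carlitzAux]⟩

theorem hasCarlitzForm_id : HasCarlitzForm (id : F → F) := by
  have h := hasCarlitzForm_affine one_ne_zero (0 : F)
  simp only [one_mul, add_zero] at h
  exact h

namespace HasCarlitzForm

theorem inv_add (hq : 3 ≤ Fintype.card F) {g : F → F} (hg : HasCarlitzForm g) (d : F) :
    HasCarlitzForm fun x => (g x)⁻¹ + d := by
  obtain ⟨n, c, h0, hc, hg⟩ := hg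
  obtain rfl : g = carlitzAux _ c n := funext hg
  clear hg
  cases n with
  | zero =>
    refine ⟨1, Function.update c 2 d, by simpa, by omega, fun x => ?_⟩
    rw [carlitzAux_succ hq, Function.update_self,
      carlitzAux_congr fun i hi => Function.update_of_ne (by omega) _ c]
  | succ m =>
    rcases eq_or_ne (c (m + 2)) 0 with hcm | hcm
    · -- the last constant vanishes, so the new inversion cancels the last one
      refine ⟨m, Function.update c (m + 1) (c (m + 1) + d), ?_, ?_, fun x => ?_⟩
      · rwa [Function.update_of_ne (by omega)]
      · intro i h2 him
        rw [Function.update_of_ne (by omega)]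
        exact hc i h2 (by omega)
      · rw [carlitzAux_update_succ_add]
        dsimp only
        rw [carlitzAux_succ hq, hcm, add_zero, inv_inv]
    · refine ⟨m + 2, Function.update c (m + 3) d, ?_, ?_, fun x => ?_⟩
      · rwa [Function.update_of_ne (by omega)]
      · intro i h2 him
        rw [Function.update_of_ne (by omega)]
        rcases eq_or_ne i (m + 2) with rfl | hne
        · exact hcm
        · exact hc i h2 (by omega)
      · rw [carlitzAux_succ hq, Function.update_self,
          carlitzAux_congr fun i hi => Function.update_of_ne (by omega) _ c]

theorem affine_comp (hq : 3 ≤ Fintype.card F) {g : F → F} (hg : HasCarlitzForm g) {a : F}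
    (ha : a ≠ 0) (b : F) : HasCarlitzForm fun x => a * g x + b := by
  obtain ⟨n, c, h0, -, hg⟩ := hg
  obtain rfl : g = carlitzAux _ c n := funext hg
  clear hg
  induction n generalizing a b with
  | zero =>
    convert hasCarlitzForm_affine (mul_ne_zero ha h0) (a * c 1 + b) using 2
    simp only [carlitzAux]; ring
  | succ m ih =>
    convert (ih (inv_ne_zero ha) 0).inv_add hq (a * c (m + 2) + b) using 2 with x
    rw [carlitzAux_succ hq, add_zero, mul_inv, inv_inv]
    ring

theorem comp (hq : 3 ≤ Fintype.card F) {f g : F → F} (hf : HasCarlitzForm f)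
    (hg : HasCarlitzForm g) : HasCarlitzForm (f ∘ g) := by
  obtain ⟨n, c, h0, -, hf⟩ := hf
  obtain rfl : f = carlitzAux _ c n := funext hf
  clear hf
  induction n with
  | zero => exact hg.affine_comp hq h0 (c 1)
  | succ m ih =>
    convert ih.inv_add hq (c (m + 2)) using 2 with x
    exact carlitzAux_succ hq c m (g x)

end HasCarlitzForm

variable [DecidableEq F]

theorem hasCarlitzForm_swap_zero_one (hq : 3 ≤ Fintype.card F) :
    HasCarlitzForm (Equiv.swap (0 : F) 1) := by
  convert (((hasCarlitzForm_affine (neg_ne_zero.2 one_ne_zero) 1).inv_add hq (-1)).inv_add hq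
    1).inv_add hq 0 using 1
  funext x
  rcases eq_or_ne x 0 with rfl | hx0
  · simp
  rcases eq_or_ne x 1 with rfl | hx1
  · simp
  have h1 : 1 - x ≠ 0 := sub_ne_zero.2 hx1.symm
  have e1 : (1 - x)⁻¹ + -1 = x * (1 - x)⁻¹ := by linear_combination mul_inv_cancel₀ h1
  have e2 : x⁻¹ * (1 - x) + 1 = x⁻¹ := by linear_combination -mul_inv_cancel₀ hx0
  rw [Equiv.swap_apply_of_ne_of_ne hx0 hx1, neg_one_mul, neg_add_eq_sub, e1, mul_inv, inv_inv, e2,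
    inv_inv, add_zero]

theorem hasCarlitzForm_swap (hq : 3 ≤ Fintype.card F) (a b : F) :
    HasCarlitzForm (Equiv.swap a b) := by
  rcases eq_or_ne a b with rfl | hab
  · rw [Equiv.swap_self, Equiv.coe_refl]
    exact hasCarlitzForm_id
  have hba : b - a ≠ 0 := sub_ne_zero.2 hab.symm
  set A : F → F := fun t => (b - a) * t + a
  have hA : Function.Injective A := fun s t h => mul_left_cancel₀ hba (add_right_cancel h)
  convert ((hasCarlitzForm_swap_zero_one hq).comp hq
    (hasCarlitzForm_affine (inv_ne_zero hba) (-a / (b - a)))).affine_comp hq hba a using 1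
  funext x
  have hx : A ((b - a)⁻¹ * x + -a / (b - a)) = x := by simp only [A]; field_simp; ring
  have := hA.swap_apply 0 1 ((b - a)⁻¹ * x + -a / (b - a))
  rwa [show A 0 = a by simp [A], show A 1 = b by simp [A], hx] at this

theorem hasCarlitzForm_perm (hq : 3 ≤ Fintype.card F) (σ : Equiv.Perm F) : HasCarlitzForm σ := by
  induction σ using Equiv.Perm.swap_induction_on with
  | one => exact hasCarlitzForm_id
  | swap_mul σ a b _ ih => simpa using (hasCarlitzForm_swap hq a b).comp hq ih

theorem isCarlitzForm_carlitzRank (hq : 3 ≤ Fintype.card F) {f : F → F}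
    (hf : Function.Bijective f) : IsCarlitzForm f (carlitzRank f) :=
  Nat.sInf_mem (hasCarlitzForm_perm hq (Equiv.ofBijective f hf))

theorem exists_mobius_eqOn_compl_carlitzAux (hq : 3 ≤ Fintype.card F) (c : ℕ → F)
    (h0 : c 0 ≠ 0) (n : ℕ) :
    ∃ α β γ δ : F, α * δ - β * γ ≠ 0 ∧ ∃ T : Finset F, #T ≤ n ∧
      ∀ x ∉ T, γ * x + δ ≠ 0 ∧ carlitzAux (Fintype.card F) c n x = (α * x + β) / (γ * x + δ) := by
  induction n with
  | zero =>
    refine ⟨c 0, c 1, 0, 1, by simpa using h0, ∅, le_rfl, fun x _ => ⟨by simp, ?_⟩⟩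
    simp [carlitzAux]
  | succ m ih =>
    obtain ⟨α, β, γ, δ, hdet, T, hT, hT_eq⟩ := ih
    refine ⟨γ + c (m + 2) * α, δ + c (m + 2) * β, α, β, fun h => hdet (by linear_combination -h),
      insert (-β / α) T, (card_insert_le _ _).trans (by omega), fun x hx => ?_⟩
    rw [mem_insert, not_or] at hx
    obtain ⟨hden, hval⟩ := hT_eq x hx.2
    -- the only possible root of `α * x + β` is the excluded point `-β / α`
    have hnum : α * x + β ≠ 0 := by
      rcases eq_or_ne α 0 with rfl | hα
      · intro h
        exact hdet (by simp_all)
      · intro h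
        exact hx.1 (by field_simp; linear_combination h)
    refine ⟨hnum, ?_⟩
    rw [carlitzAux_succ hq, hval, inv_div, div_add' _ _ _ hnum]
    ring_nf

end Carlitz

/-- For a permutation polynomial `f` of `F_q` (`q ≥ 3`), there are
`α, β, γ, δ ∈ F_q`, with `γ, δ` not both zero, such that
`f(c) = (αc+β)/(γc+δ)` (with `γc+δ ≠ 0`) for at least `q − Crk(f)` elements `c`. -/
theorem stmt2 {F : Type*} [Field F] [Fintype F] [DecidableEq F]
    (hq : 3 ≤ Fintype.card F) (f : Polynomial F)
    (hperm : Function.Bijective fun x => f.eval x) :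
    ∃ α β γ δ : F, (γ ≠ 0 ∨ δ ≠ 0) ∧
      (Fintype.card F : ℤ) - (carlitzRank (fun x => f.eval x) : ℤ) ≤
        ((Finset.univ.filter
          (fun c : F => γ * c + δ ≠ 0 ∧ f.eval c = (α * c + β) / (γ * c + δ))).card : ℤ) := by
  obtain ⟨c, h0, -, hf⟩ := isCarlitzForm_carlitzRank hq hperm
  obtain ⟨α, β, γ, δ, hdet, T, hT, hT_eq⟩ := exists_mobius_eqOn_compl_carlitzAux hq c h0 _
  refine ⟨α, β, γ, δ, ?_, ?_⟩
  · by_contra! h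
    exact hdet (by simp [h.1, h.2])
  · have hsub : Tᶜ ⊆ univ.filter
        (fun x : F => γ * x + δ ≠ 0 ∧ f.eval x = (α * x + β) / (γ * x + δ)) := fun x hx =>
      have ⟨hden, hval⟩ := hT_eq x (mem_compl.1 hx)
      mem_filter.2 ⟨mem_univ x, hden, (hf x).trans hval⟩
    have hcard := card_le_card hsub
    rw [card_compl] at hcard
    have := card_le_univ T
    omega
end

section
/- Let q be a prime power, let ℓ be a divisor of q−1, let f be an r-th order cyclotomic mapping of index ℓ on F_q with coefficients a_0, …, a_{ℓ−1} ∈ F_q^* which is a permutation of F_q, and let α, β, γ, δ ∈ F_q with β ≠ 0 or γ ≠ 0. Then the number of c ∈ F_q^* with γc + δ ≠ 0 and f(c) = (αc + β)/(γc + δ) is at most (r+1)·ℓ. -/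
open Polynomial Finset

/-- If `f` is an `r`-th order cyclotomic mapping of index `ℓ ∣ q−1`
which permutes `F_q`, and `β ≠ 0` or `γ ≠ 0`, then the number of `c ∈ F_q^*` with
`γc+δ ≠ 0` and `f(c) = (αc+β)/(γc+δ)` is at most `(r+1)·ℓ`. -/
theorem stmt5 {F : Type*} [Field F] [Fintype F] [DecidableEq F]
    (ℓ r : ℕ) (hl : ℓ ∣ Fintype.card F - 1) (hr : 1 ≤ r)
    (ξ : F) (hξ : orderOf ξ = Fintype.card F - 1) (a : ℕ → F) (f : F → F)
    (hcyc : IsCycMap ℓ r ξ a f) (hperm : Function.Bijective f)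
    (α β γ δ : F) (h : β ≠ 0 ∨ γ ≠ 0) :
    (((Finset.univ.erase (0 : F)).filter
      (fun c => γ * c + δ ≠ 0 ∧ f c = (α * c + β) / (γ * c + δ))).card) ≤ (r + 1) * ℓ := by
  classical
  obtain ⟨hf0, ha, hmap⟩ := hcyc
  have hcard : 1 < Fintype.card F := Fintype.one_lt_card
  have hℓpos : 0 < ℓ := by
    rcases Nat.eq_zero_or_pos ℓ with h0 | h
    · subst h0
      have := Nat.eq_zero_of_zero_dvd hl
      omega
    · exact h
  have hξord : ξ ^ (Fintype.card F - 1) = 1 := hξ ▸ pow_orderOf_eq_one ξ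
  have hξ0 : ξ ≠ 0 := by
    intro h0
    rw [h0, zero_pow (by omega)] at hξord
    exact zero_ne_one hξord
  -- decomposition of nonzero elements into cosets
  have hdecomp : ∀ c : F, c ≠ 0 → ∃ i < ℓ, ∃ y : F, y ≠ 0 ∧ c = ξ ^ i * y ^ ℓ := by
    intro c hc0
    set u : Fˣ := Units.mk0 ξ hξ0 with hu
    have hcu : orderOf u = Fintype.card Fˣ := by
      rw [← orderOf_units, Fintype.card_units]
      exact hξ
    have htop : Subgroup.zpowers u = ⊤ := by
      apply Subgroup.eq_top_of_card_eq
      rw [Nat.card_zpowers, hcu, Nat.card_eq_fintype_card]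
    have hmem : Units.mk0 c hc0 ∈ Submonoid.powers u := by
      rw [mem_powers_iff_mem_zpowers, htop]
      trivial
    obtain ⟨k, hk⟩ := hmem
    have hck : c = ξ ^ k := by
      have := congrArg (Units.val) hk
      simpa [hu] using this.symm
    refine ⟨k % ℓ, Nat.mod_lt _ hℓpos, ξ ^ (k / ℓ), pow_ne_zero _ hξ0, ?_⟩
    rw [hck, ← pow_mul, ← pow_add]
    congr 1
    exact (Nat.mod_add_div' k ℓ).symm
  -- the polynomials
  set P : ℕ → F[X] := fun i =>
    C (a i * γ) * X ^ (r + 1) + C (a i * δ) * X ^ r - C α * X - C β with hPdef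
  have hPne : ∀ i < ℓ, P i ≠ 0 := by
    intro i hi hP0
    rcases h with hβ | hγ
    · have h0 := congrArg (fun p => Polynomial.coeff p 0) hP0
      simp only [hPdef, coeff_sub, coeff_add, coeff_C_mul, coeff_X_pow, coeff_X_zero,
        coeff_C_zero, coeff_zero] at h0
      rw [if_neg (by omega), if_neg (by omega)] at h0
      simp at h0
      exact hβ h0
    · have h0 := congrArg (fun p => Polynomial.coeff p (r + 1)) hP0
      simp only [hPdef, coeff_sub, coeff_add, coeff_C_mul, coeff_X_pow, coeff_X,
        coeff_C, coeff_zero] at h0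
      rw [if_neg (by omega : ¬ r + 1 = r), if_neg (by omega : ¬ 1 = r + 1),
        if_neg (by omega : ¬ r + 1 = 0)] at h0
      simp at h0
      rcases h0 with h0 | h0
      · exact ha i hi h0
      · exact hγ h0
  have hroots : ∀ i, ((P i).roots.toFinset).card ≤ r + 1 := by
    intro i
    calc ((P i).roots.toFinset).card ≤ Multiset.card (P i).roots :=
          Multiset.toFinset_card_le _
      _ ≤ (P i).natDegree := Polynomial.card_roots' _
      _ ≤ r + 1 := by
          rw [hPdef]
          refine (natDegree_sub_le _ _).trans (max_le ?_ (by simp))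
          refine (natDegree_sub_le _ _).trans (max_le ?_ ?_)
          · refine (natDegree_add_le _ _).trans (max_le ?_ ?_)
            · exact (natDegree_C_mul_le _ _).trans (by simp)
            · exact (natDegree_C_mul_le _ _).trans (by simp)
          · exact (natDegree_C_mul_le _ _).trans (natDegree_X_le.trans (by omega))
  -- subset of the union of root sets
  have hsub : ((Finset.univ.erase (0 : F)).filter
      (fun c => γ * c + δ ≠ 0 ∧ f c = (α * c + β) / (γ * c + δ))) ⊆
      (Finset.range ℓ).biUnion (fun i => (P i).roots.toFinset) := by
    intro c hc
    simp only [Finset.mem_filter, Finset.mem_erase] at hc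
    obtain ⟨⟨hc0, -⟩, hγδ, hfc⟩ := hc
    obtain ⟨i, hi, y, hy, hceq⟩ := hdecomp c hc0
    have hfeq : f c = a i * c ^ r := by rw [hceq]; exact hmap i hi y hy
    rw [hfeq, eq_div_iff hγδ] at hfc
    simp only [Finset.mem_biUnion, Finset.mem_range]
    refine ⟨i, hi, ?_⟩
    rw [Multiset.mem_toFinset, mem_roots (hPne i hi)]
    simp only [hPdef, IsRoot, eval_sub, eval_add, eval_mul, eval_C, eval_pow, eval_X]
    linear_combination hfc
  calc ((Finset.univ.erase (0 : F)).filter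
      (fun c => γ * c + δ ≠ 0 ∧ f c = (α * c + β) / (γ * c + δ))).card
      ≤ ((Finset.range ℓ).biUnion (fun i => (P i).roots.toFinset)).card :=
        Finset.card_le_card hsub
    _ ≤ ∑ i ∈ Finset.range ℓ, ((P i).roots.toFinset).card := Finset.card_biUnion_le
    _ ≤ ∑ _i ∈ Finset.range ℓ, (r + 1) := Finset.sum_le_sum fun i _ => hroots i
    _ = (r + 1) * ℓ := by rw [Finset.sum_const, Finset.card_range, smul_eq_mul, Nat.mul_comm]
end

section
/- Let q be a prime power, let ℓ be a divisor of q−1, let f be an r-th order cyclotomic mapping of index ℓ on F_q with 1 ≤ r ≤ q−1 and coefficients a_0, …, a_{ℓ−1} ∈ F_q^* which is a permutation of F_q, and let α, β, γ, δ ∈ F_q with α ≠ 0 or δ ≠ 0. Then the number of c ∈ F_q^* with γc + δ ≠ 0 and f(c) = (αc + β)/(γc + δ) is at most (q−r)·ℓ. -/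
open Polynomial Finset

/-! On the cyclotomic coset `C_i` the map is `c ↦ a_i c^r`, so a solution in `C_i` is a nonzero
root of `a_i c^r (γc + δ) = αc + β`. For `r < q - 1`, multiplying by `c^s` with `s = q - 1 - r`
turns this into a root of `αX^{s+1} + βX^s - a_iγX - a_iδ`, a nonzero polynomial (look at its
leading and constant coefficients) of degree at most `q - r`. For `r = q - 1` the map is constant
on each coset, so injectivity leaves at most one solution per coset. Summing over the `ℓ` cosets
gives `(q - r)ℓ`. -/

section

variable {F : Type*} [Field F] [Fintype F] [DecidableEq F]

theorem card_filter_mul_pow_mul_eq_le {a α β γ δ : F} {r : ℕ} (ha : a ≠ 0)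
    (hr : r < Fintype.card F - 1) (h : α ≠ 0 ∨ δ ≠ 0) :
    #((univ.erase 0).filter fun c => a * c ^ r * (γ * c + δ) = α * c + β)
      ≤ Fintype.card F - r := by
  set s := Fintype.card F - 1 - r
  set P : F[X] := C α * X ^ (s + 1) + C β * X ^ s - C (a * γ) * X - C (a * δ)
  have hs : 1 ≤ s := by omega
  have hP : P ≠ 0 := by
    have hlead : P.coeff (s + 1) = α := by
      simp [P, coeff_C, coeff_X_pow]; omega
    have hconst : P.coeff 0 = -(a * δ) := by
      simp [P, coeff_X, coeff_C, coeff_X_pow]; omega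
    rintro hP
    rw [hP, coeff_zero] at hlead hconst
    rcases h with hα | hδ
    · exact hα hlead.symm
    · exact mul_ne_zero ha hδ (neg_eq_zero.1 hconst.symm)
  calc _ ≤ P.natDegree := card_le_degree_of_subset_roots fun c hc => by
          simp only [Finset.mem_val, mem_filter, mem_erase] at hc
          obtain ⟨⟨hc0, -⟩, hsol⟩ := hc
          have hcs : c ^ r * c ^ s = 1 := by
            rw [← pow_add, show r + s = Fintype.card F - 1 by omega]
            exact FiniteField.pow_card_sub_one_eq_one c hc0
          rw [mem_roots hP, IsRoot, eval_sub, eval_sub, eval_add]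
          simp only [eval_mul, eval_pow, eval_C, eval_X]
          linear_combination (-c ^ s) * hsol + a * (γ * c + δ) * hcs
    _ ≤ s + 1 := by simp only [P]; compute_degree
    _ = Fintype.card F - r := by omega

-- `C_i = ξ^i C_0`, with `C_0` the nonzero `ℓ`-th powers.
def cycCoset (ℓ : ℕ) (ξ : F) (i : ℕ) : Finset F :=
  (univ.erase 0).image fun y => ξ ^ i * y ^ ℓ

theorem exists_mem_cycCoset {ξ c : F} {ℓ : ℕ} (hξ : orderOf ξ = Fintype.card F - 1)
    (hℓ : 0 < ℓ) (hc : c ≠ 0) : ∃ i < ℓ, c ∈ cycCoset ℓ ξ i := by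
  have : NeZero (Fintype.card F - 1) := ⟨by have := Fintype.one_lt_card (α := F); omega⟩
  have hprim : IsPrimitiveRoot ξ (Fintype.card F - 1) := hξ ▸ IsPrimitiveRoot.orderOf ξ
  obtain ⟨n, -, rfl⟩ := hprim.eq_pow_of_pow_eq_one (FiniteField.pow_card_sub_one_eq_one c hc)
  refine ⟨n % ℓ, Nat.mod_lt _ hℓ, mem_image.2 ⟨ξ ^ (n / ℓ), ?_, ?_⟩⟩
  · exact mem_erase.2 ⟨pow_ne_zero _ (hprim.ne_zero (NeZero.ne _)), mem_univ _⟩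
  · rw [← pow_mul, ← pow_add, Nat.mod_add_div']

namespace IsCycMap

variable {ℓ r i : ℕ} {ξ : F} {a : ℕ → F} {f : F → F}

theorem apply_of_mem_cycCoset (hf : IsCycMap ℓ r ξ a f) (hi : i < ℓ) {c : F}
    (hc : c ∈ cycCoset ℓ ξ i) : f c = a i * c ^ r := by
  obtain ⟨y, hy, rfl⟩ := mem_image.1 hc
  exact hf.2.2 i hi y (mem_erase.1 hy).1

theorem card_cycCoset_le_one (hf : IsCycMap ℓ (Fintype.card F - 1) ξ a f)
    (hinj : Function.Injective f) (hξ : ξ ≠ 0) (hi : i < ℓ) : #(cycCoset ℓ ξ i) ≤ 1 := by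
  have hconst : ∀ c ∈ cycCoset ℓ ξ i, f c = a i := fun c hc => by
    have hc0 : c ≠ 0 := by
      obtain ⟨y, hy, rfl⟩ := mem_image.1 hc
      exact mul_ne_zero (pow_ne_zero _ hξ) (pow_ne_zero _ (mem_erase.1 hy).1)
    rw [hf.apply_of_mem_cycCoset hi hc, FiniteField.pow_card_sub_one_eq_one c hc0, mul_one]
  exact card_le_one.2 fun c hc d hd => hinj ((hconst c hc).trans (hconst d hd).symm)

theorem card_filter_mem_cycCoset_le (hf : IsCycMap ℓ r ξ a f) (hinj : Function.Injective f)
    (hξ : ξ ≠ 0) (hr : r ≤ Fintype.card F - 1) {α β γ δ : F} (h : α ≠ 0 ∨ δ ≠ 0) (hi : i < ℓ)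
    {s : Finset F} (hs : ∀ c ∈ s, c ≠ 0 ∧ γ * c + δ ≠ 0 ∧ f c = (α * c + β) / (γ * c + δ)) :
    #(s.filter (· ∈ cycCoset ℓ ξ i)) ≤ Fintype.card F - r := by
  rcases hr.lt_or_eq with hr | rfl
  · refine (card_le_card fun c hc => ?_).trans
      (card_filter_mul_pow_mul_eq_le (β := β) (γ := γ) (hf.2.1 i hi) hr h)
    obtain ⟨hcs, hci⟩ := mem_filter.1 hc
    obtain ⟨hc0, hne, hfc⟩ := hs c hcs
    rw [hf.apply_of_mem_cycCoset hi hci, eq_div_iff hne] at hfc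
    exact mem_filter.2 ⟨mem_erase.2 ⟨hc0, mem_univ _⟩, hfc⟩
  · rw [Nat.sub_sub_self Fintype.card_pos]
    exact (card_le_card fun c hc => (mem_filter.1 hc).2).trans
      (hf.card_cycCoset_le_one hinj hξ hi)

end IsCycMap

end

theorem stmt6_general {F : Type*} [Field F] [Fintype F] [DecidableEq F]
    (ℓ r : ℕ) (hl : ℓ ∣ Fintype.card F - 1) (hr' : r ≤ Fintype.card F - 1)
    (ξ : F) (hξ : orderOf ξ = Fintype.card F - 1) (a : ℕ → F) (f : F → F)
    (hcyc : IsCycMap ℓ r ξ a f) (hperm : Function.Bijective f)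
    (α β γ δ : F) (h : α ≠ 0 ∨ δ ≠ 0) :
    (((Finset.univ.erase (0 : F)).filter
      (fun c => γ * c + δ ≠ 0 ∧ f c = (α * c + β) / (γ * c + δ))).card)
      ≤ (Fintype.card F - r) * ℓ := by
  have hq : 1 < Fintype.card F := Fintype.one_lt_card
  have hℓ : 0 < ℓ := Nat.pos_of_dvd_of_pos hl (by omega)
  have hξ0 : ξ ≠ 0 := by
    rintro rfl
    rw [orderOf_zero] at hξ
    omega
  set S := (Finset.univ.erase (0 : F)).filter
    (fun c => γ * c + δ ≠ 0 ∧ f c = (α * c + β) / (γ * c + δ))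
  have hS : ∀ c ∈ S, c ≠ 0 ∧ γ * c + δ ≠ 0 ∧ f c = (α * c + β) / (γ * c + δ) :=
    fun c hc => by simpa [S] using hc
  calc #S ≤ #((range ℓ).biUnion fun i => S.filter (· ∈ cycCoset ℓ ξ i)) :=
        card_le_card fun c hc => by
          obtain ⟨i, hi, hci⟩ := exists_mem_cycCoset hξ hℓ (hS c hc).1
          exact mem_biUnion.2 ⟨i, mem_range.2 hi, mem_filter.2 ⟨hc, hci⟩⟩
    _ ≤ ∑ i ∈ range ℓ, #(S.filter (· ∈ cycCoset ℓ ξ i)) := card_biUnion_le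
    _ ≤ ∑ _i ∈ range ℓ, (Fintype.card F - r) := sum_le_sum fun i hi =>
        hcyc.card_filter_mem_cycCoset_le hperm.1 hξ0 hr' h (mem_range.1 hi) hS
    _ = (Fintype.card F - r) * ℓ := by rw [sum_const, card_range, smul_eq_mul, mul_comm]

/-- If `f` is an `r`-th order cyclotomic mapping of index `ℓ ∣ q−1`
(with `1 ≤ r ≤ q−1`) which permutes `F_q`, and `α ≠ 0` or `δ ≠ 0`, then the number of
`c ∈ F_q^*` with `γc+δ ≠ 0` and `f(c) = (αc+β)/(γc+δ)` is at most `(q−r)·ℓ`. -/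
theorem stmt6 {F : Type*} [Field F] [Fintype F] [DecidableEq F]
    (ℓ r : ℕ) (hl : ℓ ∣ Fintype.card F - 1) (hr : 1 ≤ r) (hr' : r ≤ Fintype.card F - 1)
    (ξ : F) (hξ : orderOf ξ = Fintype.card F - 1) (a : ℕ → F) (f : F → F)
    (hcyc : IsCycMap ℓ r ξ a f) (hperm : Function.Bijective f)
    (α β γ δ : F) (h : α ≠ 0 ∨ δ ≠ 0) :
    (((Finset.univ.erase (0 : F)).filter
      (fun c => γ * c + δ ≠ 0 ∧ f c = (α * c + β) / (γ * c + δ))).card)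
      ≤ (Fintype.card F - r) * ℓ :=
  stmt6_general ℓ r hl hr' ξ hξ a f hcyc hperm α β γ δ h
end

section
/- Let q be a prime power, let ℓ be a divisor of q−1, let f be an r-th order cyclotomic mapping of index ℓ on F_q with coefficients a_0, …, a_{ℓ−1} ∈ F_q^* which is a permutation of F_q, and let α, β, γ, δ ∈ F_q with αδ ≠ βγ and αγ ≠ 0. Then the number N of c ∈ F_q^* with γc + δ ≠ 0 and f(c) = (αc + β)/(γc + δ) satisfies N < max{ 3ℓ, (3q)^{1/2} }. -/
open Polynomial Finset

theorem primitive_ne_zero {F : Type*} [Field F] [Fintype F] (ξ : F)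
    (hξ : orderOf ξ = Fintype.card F - 1) : ξ ≠ 0 := by
  have hq : 1 < Fintype.card F := Fintype.one_lt_card
  intro h
  have := pow_orderOf_eq_one ξ
  rw [hξ, h, zero_pow (by omega)] at this
  exact zero_ne_one this

theorem exists_pow_eq' {F : Type*} [Field F] [Fintype F] [DecidableEq F] (ξ : F)
    (hξ : orderOf ξ = Fintype.card F - 1)
    (c : F) (hc : c ≠ 0) : ∃ k : ℕ, c = ξ ^ k := by
  have hq : 1 < Fintype.card F := Fintype.one_lt_card
  have hξ0 : ξ ≠ 0 := primitive_ne_zero ξ hξ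
  set ξ' : Fˣ := Units.mk0 ξ hξ0 with hξ'
  have ho : orderOf ξ' = Fintype.card Fˣ := by
    rw [← orderOf_units, Fintype.card_units]
    exact hξ
  have htop : Subgroup.zpowers ξ' = ⊤ := by
    apply Subgroup.eq_top_of_card_eq
    rw [Nat.card_zpowers, ho, Nat.card_eq_fintype_card]
  have hmem : (Units.mk0 c hc) ∈ Subgroup.zpowers ξ' := htop ▸ Subgroup.mem_top _
  rw [← mem_powers_iff_mem_zpowers] at hmem
  obtain ⟨k, hk⟩ := hmem
  refine ⟨k, ?_⟩
  have := congrArg Units.val hk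
  simpa [hξ'] using this.symm

theorem coset_rep {F : Type*} [Field F] [Fintype F] [DecidableEq F] (ℓ : ℕ) (hl0 : 0 < ℓ)
    (ξ : F) (hξ : orderOf ξ = Fintype.card F - 1)
    (c : F) (hc : c ≠ 0) : ∃ i < ℓ, ∃ y : F, y ≠ 0 ∧ c = ξ ^ i * y ^ ℓ := by
  obtain ⟨k, rfl⟩ := exists_pow_eq' ξ hξ c hc
  refine ⟨k % ℓ, Nat.mod_lt _ hl0, ξ ^ (k / ℓ), pow_ne_zero _ (primitive_ne_zero ξ hξ), ?_⟩
  rw [← pow_mul, ← pow_add]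
  congr 1
  exact (Nat.mod_add_div' k ℓ).symm

theorem root_is_pow {F : Type*} [Field F] [Fintype F] [DecidableEq F] (ℓ m : ℕ)
    (hlm : ℓ * m = Fintype.card F - 1) (hm0 : 0 < m)
    (ξ : F) (hξ : orderOf ξ = Fintype.card F - 1)
    (u : F) (hu : u ^ m = 1) : ∃ z : F, z ≠ 0 ∧ u = z ^ ℓ := by
  have hu0 : u ≠ 0 := by
    intro h; rw [h, zero_pow (by omega)] at hu; exact zero_ne_one hu
  obtain ⟨k, rfl⟩ := exists_pow_eq' ξ hξ u hu0
  rw [← pow_mul] at hu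
  have hdvd : Fintype.card F - 1 ∣ k * m := by
    rw [← hξ]; exact orderOf_dvd_of_pow_eq_one hu
  rw [← hlm] at hdvd
  have : ℓ ∣ k := by
    rcases hdvd with ⟨t, ht⟩
    refine ⟨t, ?_⟩
    have h2 : k * m = (ℓ * t) * m := by rw [ht]; ring
    have := Nat.eq_of_mul_eq_mul_right hm0 h2
    omega
  rcases this with ⟨s, rfl⟩
  exact ⟨ξ ^ s, pow_ne_zero _ (primitive_ne_zero ξ hξ), by rw [← pow_mul, mul_comm ℓ s]⟩

/-- If `f` is an `r`-th order cyclotomic mapping of index `ℓ ∣ q−1`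
which permutes `F_q`, and `αδ ≠ βγ` and `αγ ≠ 0`, then the number `N` of `c ∈ F_q^*`
with `γc+δ ≠ 0` and `f(c) = (αc+β)/(γc+δ)` satisfies `N < max{3ℓ, (3q)^{1/2}}`. -/
theorem stmt7 {F : Type*} [Field F] [Fintype F] [DecidableEq F]
    (ℓ r : ℕ) (hl : ℓ ∣ Fintype.card F - 1) (hr : 1 ≤ r)
    (ξ : F) (hξ : orderOf ξ = Fintype.card F - 1) (a : ℕ → F) (f : F → F)
    (hcyc : IsCycMap ℓ r ξ a f) (hperm : Function.Bijective f)
    (α β γ δ : F) (hdet : α * δ ≠ β * γ) (hαγ : α * γ ≠ 0) :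
    ((((Finset.univ.erase (0 : F)).filter
      (fun c => γ * c + δ ≠ 0 ∧ f c = (α * c + β) / (γ * c + δ))).card) : ℝ)
      < max (3 * (ℓ : ℝ)) (Real.sqrt (3 * (Fintype.card F : ℝ))) := by
  classical
  have hq2 : 2 ≤ Fintype.card F := Fintype.one_lt_card
  have hl0 : 0 < ℓ := Nat.pos_of_dvd_of_pos hl (by omega)
  set q := Fintype.card F with hqdef
  set m := (q - 1) / ℓ with hmdef
  have hlm : ℓ * m = q - 1 := Nat.mul_div_cancel' hl
  have hm0 : 0 < m := by
    rcases Nat.eq_zero_or_pos m with h | h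
    · rw [h, mul_zero] at hlm; omega
    · exact h
  set S := (Finset.univ.erase (0 : F)).filter
      (fun c => γ * c + δ ≠ 0 ∧ f c = (α * c + β) / (γ * c + δ)) with hSdef
  set N := S.card with hNdef
  have hSmem : ∀ c ∈ S, c ≠ 0 ∧ γ * c + δ ≠ 0 ∧ f c * (γ * c + δ) = α * c + β := by
    intro c hc
    rw [hSdef, mem_filter, mem_erase] at hc
    refine ⟨hc.1.1, hc.2.1, ?_⟩
    rw [hc.2.2, div_mul_cancel₀]
    exact hc.2.1
  -- key3 : same-coset formula
  have key3 : ∀ c : F, c ≠ 0 → ∀ u : F, u ^ m = 1 →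
      ∃ b : F, b ≠ 0 ∧ f c = b * c ^ r ∧ f (u * c) = b * u ^ r * c ^ r := by
    intro c hc u hu
    obtain ⟨i, hi, y, hy, hcy⟩ := coset_rep ℓ hl0 ξ hξ c hc
    obtain ⟨z, hz, huz⟩ := root_is_pow ℓ m hlm hm0 ξ hξ u hu
    refine ⟨a i, hcyc.2.1 i hi, ?_, ?_⟩
    · rw [hcy, hcyc.2.2 i hi y hy]
    · have huc : u * c = ξ ^ i * (z * y) ^ ℓ := by
        rw [hcy, huz, mul_pow]; ring
      rw [huc, hcyc.2.2 i hi (z * y) (mul_ne_zero hz hy), ← huc, mul_pow, mul_assoc]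
  -- key4 : u^m = 1 and u^r = 1 imply u = 1
  have key4 : ∀ u : F, u ^ m = 1 → u ^ r = 1 → u = 1 := by
    intro u hu hur
    obtain ⟨z, hz, huz⟩ := root_is_pow ℓ m hlm hm0 ξ hξ u hu
    have h1 : f u = a 0 := by
      have : u = ξ ^ 0 * z ^ ℓ := by rw [pow_zero, one_mul, huz]
      rw [this, hcyc.2.2 0 hl0 z hz, ← this, hur, mul_one]
    have h2 : f 1 = a 0 := by
      have : (1 : F) = ξ ^ 0 * (1 : F) ^ ℓ := by simp
      rw [this, hcyc.2.2 0 hl0 1 one_ne_zero, ← this, one_pow, mul_one]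
    exact hperm.injective (h1.trans h2.symm)
  -- the set of m-th roots of unity
  set U := Finset.univ.filter (fun u : F => u ^ m = 1) with hUdef
  have hUcard : U.card ≤ m := by
    have hsub : U ⊆ (nthRoots m (1 : F)).toFinset := by
      intro u hu
      rw [Multiset.mem_toFinset, mem_nthRoots hm0]
      exact (mem_filter.mp hu).2
    calc U.card ≤ (nthRoots m (1 : F)).toFinset.card := card_le_card hsub
      _ ≤ Multiset.card (nthRoots m (1 : F)) := Multiset.toFinset_card_le _
      _ ≤ m := card_nthRoots m 1
  have hU1 : (1 : F) ∈ U := by simp [hUdef]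
  -- quadratic bound: for u ∈ U, u ≠ 1, at most 2 elements c with c, u*c ∈ S
  have quad : ∀ u : F, u ^ m = 1 → u ≠ 1 → (S.filter (fun c => u * c ∈ S)).card ≤ 2 := by
    intro u hu hu1
    set A := α * γ * u * (1 - u ^ r) with hAdef
    have hu0 : u ≠ 0 := by
      intro h; rw [h, zero_pow (by omega)] at hu; exact zero_ne_one hu
    have hur1 : u ^ r ≠ 1 := fun h => hu1 (key4 u hu h)
    have hA : A ≠ 0 := by
      rw [hAdef]
      apply mul_ne_zero (mul_ne_zero hαγ hu0)
      intro h
      apply hur1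
      have : u ^ r = 1 := by linear_combination -h
      exact this
    set B := (α * u * δ + β * γ) - u ^ r * (α * δ + β * γ * u) with hBdef
    set Cc := β * δ * (1 - u ^ r) with hCdef
    -- every c in the filter satisfies A c² + B c + Cc = 0
    have hroot : ∀ c ∈ S.filter (fun c => u * c ∈ S), A * c ^ 2 + B * c + Cc = 0 := by
      intro c hc
      rw [mem_filter] at hc
      obtain ⟨hc0, _, e1⟩ := hSmem c hc.1
      obtain ⟨_, _, e2⟩ := hSmem (u * c) hc.2
      obtain ⟨b, hb, hf1, hf2⟩ := key3 c hc0 u hu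
      rw [hf1] at e1
      rw [hf2] at e2
      rw [hAdef, hBdef, hCdef]
      linear_combination u ^ r * (γ * (u * c) + δ) * e1 - (γ * c + δ) * e2
    by_contra hcon
    push_neg at hcon
    obtain ⟨c1, c2, c3, h1, h2, h3, h12, h13, h23⟩ := two_lt_card_iff.mp hcon
    have e1 := hroot c1 h1
    have e2 := hroot c2 h2
    have e3 := hroot c3 h3
    have g12 : A * (c1 + c2) + B = 0 := by
      have h : (c1 - c2) * (A * (c1 + c2) + B) = 0 := by linear_combination e1 - e2
      rcases mul_eq_zero.mp h with h' | h'
      · exact absurd (sub_eq_zero.mp h') h12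
      · exact h'
    have g13 : A * (c1 + c3) + B = 0 := by
      have h : (c1 - c3) * (A * (c1 + c3) + B) = 0 := by linear_combination e1 - e3
      rcases mul_eq_zero.mp h with h' | h'
      · exact absurd (sub_eq_zero.mp h') h13
      · exact h'
    have : A * (c2 - c3) = 0 := by linear_combination g12 - g13
    rcases mul_eq_zero.mp this with h' | h'
    · exact hA h'
    · exact h23 (sub_eq_zero.mp h')
  -- the pair count
  set PP := ∑ c1 ∈ S, (S.filter (fun c2 => c2 ^ m = c1 ^ m)).card with hPPdef
  -- Claim 2 : PP + 2 ≤ N + 2 * m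
  have claim2 : PP + 2 ≤ N + 2 * m := by
    have hfib : ∀ c1 ∈ S, (S.filter (fun c2 => c2 ^ m = c1 ^ m)).card
        = (U.filter (fun u => u * c1 ∈ S)).card := by
      intro c1 hc1
      have hc10 : c1 ≠ 0 := (hSmem c1 hc1).1
      have himg : S.filter (fun c2 => c2 ^ m = c1 ^ m)
          = (U.filter (fun u => u * c1 ∈ S)).image (· * c1) := by
        ext c2
        simp only [mem_filter, mem_image, hUdef, mem_univ, true_and]
        constructor
        · rintro ⟨hc2S, hc2m⟩
          have hc20 : c2 ≠ 0 := (hSmem c2 hc2S).1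
          refine ⟨c2 / c1, ⟨?_, by rwa [div_mul_cancel₀ _ hc10]⟩, div_mul_cancel₀ _ hc10⟩
          rw [div_pow, hc2m, div_self (pow_ne_zero _ hc10)]
        · rintro ⟨u, ⟨hum, humS⟩, rfl⟩
          exact ⟨humS, by rw [mul_pow, hum, one_mul]⟩
      rw [himg, card_image_of_injective _ (fun x y h => by
        exact mul_right_cancel₀ hc10 h)]
    have hswap : PP = ∑ u ∈ U, (S.filter (fun c1 => u * c1 ∈ S)).card := by
      rw [hPPdef, sum_congr rfl hfib]
      simp only [card_filter]
      rw [sum_comm]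
    rw [hswap, ← Finset.add_sum_erase _ _ hU1]
    have hone : (S.filter (fun c1 => (1 : F) * c1 ∈ S)).card ≤ N := by
      apply card_le_card
      intro x hx
      exact (mem_filter.mp hx).1
    have hrest : ∑ u ∈ U.erase 1, (S.filter (fun c1 => u * c1 ∈ S)).card ≤ 2 * (m - 1) := by
      calc ∑ u ∈ U.erase 1, (S.filter (fun c1 => u * c1 ∈ S)).card
          ≤ ∑ u ∈ U.erase 1, 2 := by
            apply sum_le_sum
            intro u hu
            rw [mem_erase] at hu
            exact quad u ((mem_filter.mp hu.2).2) hu.1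
        _ = (U.erase 1).card * 2 := by rw [sum_const, smul_eq_mul]
        _ ≤ 2 * (m - 1) := by
            rw [card_erase_of_mem hU1]
            have := hUcard
            omega
    omega
  -- Claim 1 : N² ≤ ℓ * PP  (over ℝ)
  have claim1 : (N : ℝ) ^ 2 ≤ (ℓ : ℝ) * PP := by
    set V := S.image (fun c => c ^ m) with hVdef
    have hVcard : V.card ≤ ℓ := by
      have hsub : V ⊆ (nthRoots ℓ (1 : F)).toFinset := by
        intro v hv
        rw [Multiset.mem_toFinset, mem_nthRoots hl0]
        obtain ⟨c, hc, rfl⟩ := mem_image.mp hv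
        rw [← pow_mul, mul_comm m ℓ, hlm]
        exact FiniteField.pow_card_sub_one_eq_one c (hSmem c hc).1
      calc V.card ≤ (nthRoots ℓ (1 : F)).toFinset.card := card_le_card hsub
        _ ≤ Multiset.card (nthRoots ℓ (1 : F)) := Multiset.toFinset_card_le _
        _ ≤ ℓ := card_nthRoots ℓ 1
    have hNsum : N = ∑ v ∈ V, (S.filter (fun c => c ^ m = v)).card :=
      card_eq_sum_card_fiberwise (fun c hc => mem_image_of_mem _ hc)
    have hPPsum : PP = ∑ v ∈ V, ((S.filter (fun c => c ^ m = v)).card) ^ 2 := by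
      rw [hPPdef, ← sum_fiberwise_of_maps_to (fun c hc => mem_image_of_mem (fun c => c ^ m) hc)
        (fun c1 => (S.filter (fun c2 => c2 ^ m = c1 ^ m)).card)]
      apply sum_congr rfl
      intro v hv
      have : ∀ c1 ∈ S.filter (fun c => c ^ m = v),
          (S.filter (fun c2 => c2 ^ m = c1 ^ m)).card
          = (S.filter (fun c => c ^ m = v)).card := by
        intro c1 hc1
        rw [(mem_filter.mp hc1).2]
      rw [sum_congr rfl this, sum_const, smul_eq_mul, ← sq]
    have hCS : ((∑ v ∈ V, ((S.filter (fun c => c ^ m = v)).card : ℝ)) ^ 2)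
        ≤ (V.card : ℝ) * ∑ v ∈ V, ((S.filter (fun c => c ^ m = v)).card : ℝ) ^ 2 :=
      sq_sum_le_card_mul_sum_sq
    rw [hNsum, hPPsum]
    push_cast
    calc ((∑ v ∈ V, ((S.filter (fun c => c ^ m = v)).card : ℝ)) ^ 2)
        ≤ (V.card : ℝ) * ∑ v ∈ V, ((S.filter (fun c => c ^ m = v)).card : ℝ) ^ 2 := hCS
      _ ≤ (ℓ : ℝ) * ∑ v ∈ V, ((S.filter (fun c => c ^ m = v)).card : ℝ) ^ 2 := by
          apply mul_le_mul_of_nonneg_right (by exact_mod_cast hVcard)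
          exact Finset.sum_nonneg fun v hv => sq_nonneg _
  -- combine : N² + 2ℓ ≤ ℓN + 2(q-1)
  have main : (N : ℝ) ^ 2 + 2 * (ℓ : ℝ) ≤ (ℓ : ℝ) * N + 2 * ((q : ℝ) - 1) := by
    have h1 : (PP : ℝ) + 2 ≤ (N : ℝ) + 2 * m := by exact_mod_cast claim2
    have h2 : (ℓ : ℝ) * m = (q : ℝ) - 1 := by
      rw [← Nat.cast_mul, hlm, Nat.cast_sub (by omega), Nat.cast_one]
    nlinarith [claim1, Nat.cast_nonneg (α := ℝ) ℓ]
  -- finish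
  rcases lt_or_ge (N : ℝ) (3 * ℓ) with hN | hN
  · exact lt_of_lt_of_le hN (le_max_left _ _)
  · apply lt_of_lt_of_le _ (le_max_right _ _)
    have hq2' : (2 : ℝ) ≤ (q : ℝ) := by exact_mod_cast hq2
    have hl1 : (1 : ℝ) ≤ (ℓ : ℝ) := by exact_mod_cast hl0
    have hNsq : (N : ℝ) ^ 2 < 3 * (q : ℝ) := by nlinarith [main, hN]
    rw [hqdef] at hNsq
    exact Real.lt_sqrt (Nat.cast_nonneg N) |>.mpr hNsq
end

section
/- Let q be a prime power, let ℓ be a divisor of q−1, let f be an r-th order cyclotomic mapping of index ℓ on F_q with coefficients a_0, …, a_{ℓ−1} ∈ F_q^* which is a permutation of F_q, and let α, β, γ, δ ∈ F_q with α = 0 and β, γ, δ all nonzero. Then the number N of c ∈ F_q^* with γc + δ ≠ 0 and f(c) = β/(γc + δ) satisfies N < max{ 2ℓ, (2q)^{1/2} }. -/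
/-!
On the coset `ξ^i C_0` the map is `x ↦ a_i x^r`, so the solutions lying in it form part of one
level set of `g(x) = x^r (γx + δ)`. For two distinct solutions `c₁ = u c₂` in the same coset,
`g(u c₂) = g(c₂)` forces `u^(r+1) ≠ 1` and `c₂ γ (u^(r+1) - 1) = δ (1 - u^r)`, so the ratio `u`,
an element of `C_0`, determines the pair. With `n_i` solutions in `C_i` this gives
`∑ n_i (n_i - 1) ≤ |C_0| = (q - 1) / ℓ`, and Cauchy–Schwarz gives `N² ≤ ℓ ∑ n_i² ≤ ℓ N + q - 1`.
When `N ≥ 2ℓ` the right-hand side is at most `N² / 2 + q - 1`, so `N² < 2q`.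
-/

open Polynomial Finset

section FiberCount

variable {α ι : Type*} [DecidableEq ι]

theorem sq_card_le_card_mul_card_add_card_offDiag_filter (s : Finset α) (t : Finset ι)
    {κ : α → ι} (hκ : ∀ x ∈ s, κ x ∈ t) :
    #s ^ 2 ≤ #t * (#s + #{p ∈ s.offDiag | κ p.1 = κ p.2}) := by
  set fiber : ι → Finset α := fun i => {x ∈ s | κ x = i}
  have hsum : #s = ∑ i ∈ t, #(fiber i) := card_eq_sum_card_fiberwise hκ
  have hpairs : #{p ∈ s.offDiag | κ p.1 = κ p.2} = ∑ i ∈ t, #(fiber i).offDiag := by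
    rw [card_eq_sum_card_fiberwise (f := fun p => κ p.1) fun p hp =>
      hκ _ (mem_offDiag.1 (mem_filter.1 hp).1).1]
    refine sum_congr rfl fun i _ => congrArg card ?_
    ext p
    simp only [fiber, mem_filter, mem_offDiag]
    constructor
    · rintro ⟨⟨⟨h1, h2, hne⟩, h12⟩, rfl⟩
      exact ⟨⟨h1, rfl⟩, ⟨h2, h12.symm⟩, hne⟩
    · rintro ⟨⟨h1, rfl⟩, ⟨h2, h21⟩, hne⟩
      exact ⟨⟨⟨h1, h2, hne⟩, h21.symm⟩, rfl⟩
  have hsq : ∑ i ∈ t, #(fiber i) ^ 2 = #s + #{p ∈ s.offDiag | κ p.1 = κ p.2} := by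
    rw [hpairs, hsum, ← sum_add_distrib]
    refine sum_congr rfl fun i _ => ?_
    rw [offDiag_card, sq]
    have := Nat.le_mul_self #(fiber i)
    omega
  calc #s ^ 2 = (∑ i ∈ t, #(fiber i)) ^ 2 := by rw [hsum]
    _ ≤ #t * ∑ i ∈ t, #(fiber i) ^ 2 := sq_sum_le_card_mul_sum_sq
    _ = #t * (#s + #{p ∈ s.offDiag | κ p.1 = κ p.2}) := by rw [hsq]

end FiberCount

section Rational

variable {K : Type*} [Field K] {r : ℕ} {γ δ : K}

theorem pow_mul_linear_eq_of_mul_left (hδ : δ ≠ 0) {u c : K} (hu : u ≠ 1) (hc : c ≠ 0)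
    (h : (u * c) ^ r * (γ * (u * c) + δ) = c ^ r * (γ * c + δ)) :
    u ^ (r + 1) ≠ 1 ∧ c * (γ * (u ^ (r + 1) - 1)) = δ * (1 - u ^ r) := by
  have h' : u ^ r * (γ * (u * c) + δ) = γ * c + δ := by
    refine mul_left_cancel₀ (pow_ne_zero r hc) ?_
    linear_combination h
  refine ⟨fun hu1 => hu ?_, by linear_combination h'⟩
  have hur : u ^ r = 1 :=
    mul_left_cancel₀ hδ (by linear_combination h' - γ * c * hu1)
  rwa [pow_succ, hur, one_mul] at hu1

theorem injOn_div_of_pow_mul_linear_eq (hγ : γ ≠ 0) (hδ : δ ≠ 0) :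
    Set.InjOn (fun p : K × K => p.1 / p.2)
      {p | p.1 ≠ p.2 ∧ p.2 ≠ 0 ∧ p.1 ^ r * (γ * p.1 + δ) = p.2 ^ r * (γ * p.2 + δ)} := by
  rintro ⟨c₁, c₂⟩ ⟨hne, hc₂, h⟩ ⟨c₁', c₂'⟩ ⟨hne', hc₂', h'⟩ (hu : c₁ / c₂ = c₁' / c₂')
  set u := c₁ / c₂
  have hc₁ : c₁ = u * c₂ := (div_mul_cancel₀ c₁ hc₂).symm
  have hc₁' : c₁' = u * c₂' := by rw [hu, div_mul_cancel₀ c₁' hc₂']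
  have hu1 : u ≠ 1 := fun h1 => hne (by rw [hc₁, h1, one_mul])
  obtain ⟨hne1, hsol⟩ := pow_mul_linear_eq_of_mul_left hδ hu1 hc₂ (hc₁ ▸ h)
  obtain ⟨-, hsol'⟩ := pow_mul_linear_eq_of_mul_left hδ hu1 hc₂' (hc₁' ▸ h')
  have hc₂eq : c₂ = c₂' :=
    mul_right_cancel₀ (mul_ne_zero hγ (sub_ne_zero.2 hne1)) (hsol.trans hsol'.symm)
  simp only [Prod.mk.injEq]
  exact ⟨by rw [hc₁, hc₁', hc₂eq], hc₂eq⟩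

end Rational

section Cyclotomic

variable {F : Type*} [Field F]

theorem exists_cosetIndex [Fintype F] {ℓ : ℕ} (hℓ : 0 < ℓ) {ξ : F}
    (hξ : orderOf ξ = Fintype.card F - 1) :
    ∃ κ : F → ℕ, ∀ x ≠ 0, κ x < ℓ ∧ ∃ y ≠ 0, ξ ^ κ x * y ^ ℓ = x := by
  have : NeZero (Fintype.card F - 1) := ⟨Nat.sub_ne_zero_of_lt Fintype.one_lt_card⟩
  have hξ' : IsPrimitiveRoot ξ (Fintype.card F - 1) := hξ ▸ IsPrimitiveRoot.orderOf ξ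
  have hξ0 : ξ ≠ 0 := hξ'.ne_zero (NeZero.ne _)
  have hcoset : ∀ x : F, ∃ i, x ≠ 0 → i < ℓ ∧ ∃ y ≠ 0, ξ ^ i * y ^ ℓ = x := by
    intro x
    by_cases hx : x = 0
    · exact ⟨0, fun h => absurd hx h⟩
    obtain ⟨k, -, rfl⟩ := hξ'.eq_pow_of_pow_eq_one (FiniteField.pow_card_sub_one_eq_one x hx)
    refine ⟨k % ℓ, fun _ => ⟨Nat.mod_lt k hℓ, ξ ^ (k / ℓ), pow_ne_zero _ hξ0, ?_⟩⟩
    rw [← pow_mul, ← pow_add, Nat.mod_add_div']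
  choose κ hκ using hcoset
  exact ⟨κ, hκ⟩

theorem IsCycMap.apply_eq_mul_pow {ℓ r : ℕ} {ξ : F} {a : ℕ → F} {f : F → F}
    (hf : IsCycMap ℓ r ξ a f) {i : ℕ} (hi : i < ℓ) {x y : F} (hy : y ≠ 0)
    (hx : ξ ^ i * y ^ ℓ = x) : f x = a i * x ^ r :=
  hx ▸ hf.2.2 i hi y hy

theorem div_pow_eq_one_of_mul_pow_eq [Fintype F] {ℓ d : ℕ} (hd : ℓ * d = Fintype.card F - 1)
    {z y y' x x' : F} (hz : z ≠ 0) (hy : y ≠ 0) (hy' : y' ≠ 0)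
    (hx : z * y ^ ℓ = x) (hx' : z * y' ^ ℓ = x') : (x / x') ^ d = 1 := by
  rw [← hx, ← hx', mul_div_mul_left _ _ hz, ← div_pow, ← pow_mul, hd]
  exact FiniteField.pow_card_sub_one_eq_one _ (div_ne_zero hy hy')

theorem card_sameCoset_offDiag_le [Fintype F] [DecidableEq F] {ℓ d r : ℕ}
    (hd : ℓ * d = Fintype.card F - 1) {γ δ : F} (hγ : γ ≠ 0) (hδ : δ ≠ 0) {ξ : F}
    {κ : F → ℕ} {S : Finset F} (hS : ∀ x ∈ S, x ≠ 0 ∧ ∃ y ≠ 0, ξ ^ κ x * y ^ ℓ = x)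
    (hlevel : ∀ x ∈ S, ∀ x' ∈ S, κ x = κ x' →
      x ^ r * (γ * x + δ) = x' ^ r * (γ * x' + δ)) :
    #{p ∈ S.offDiag | κ p.1 = κ p.2} ≤ d := by
  have hd0 : 0 < d := Nat.pos_of_mul_pos_left (hd ▸ Nat.sub_pos_of_lt Fintype.one_lt_card)
  calc #{p ∈ S.offDiag | κ p.1 = κ p.2} ≤ #(nthRootsFinset d (1 : F)) := by
        refine card_le_card_of_injOn (fun p => p.1 / p.2) (fun p hp => ?_)
          ((injOn_div_of_pow_mul_linear_eq (r := r) hγ hδ).mono fun p hp => ?_)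
        · simp only [coe_filter, mem_offDiag, Set.mem_ofPred_eq] at hp
          obtain ⟨⟨h1, h2, -⟩, hκ⟩ := hp
          obtain ⟨hx, y, hy, hxy⟩ := hS _ h1
          obtain ⟨-, y', hy', hxy'⟩ := hS _ h2
          have hz : ξ ^ κ p.1 ≠ 0 := left_ne_zero_of_mul (hxy ▸ hx)
          rw [hκ] at hxy hz
          rw [mem_coe, mem_nthRootsFinset hd0]
          exact div_pow_eq_one_of_mul_pow_eq hd hz hy hy' hxy hxy'
        · simp only [coe_filter, mem_offDiag, Set.mem_ofPred_eq] at hp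
          obtain ⟨⟨h1, h2, hne⟩, hκ⟩ := hp
          exact ⟨hne, (hS _ h2).1, hlevel _ h1 _ h2 hκ⟩
    _ ≤ d := by
        rw [nthRootsFinset_def]
        exact (Multiset.toFinset_card_le _).trans (card_nthRoots d 1)

end Cyclotomic

theorem natCast_lt_max_of_sq_lt {N ℓ q : ℕ} (h : N ^ 2 < ℓ * N + q) :
    (N : ℝ) < max (2 * (ℓ : ℝ)) (Real.sqrt (2 * (q : ℝ))) := by
  rcases lt_or_ge (N : ℝ) (2 * ℓ) with hN | hN
  · exact lt_max_of_lt_left hN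
  · refine lt_max_of_lt_right ((Real.lt_sqrt (Nat.cast_nonneg N)).2 ?_)
    have h' : (N : ℝ) ^ 2 < ℓ * N + q := by exact_mod_cast h
    nlinarith

theorem stmt8_general {F : Type*} [Field F] [Fintype F] [DecidableEq F]
    (ℓ r : ℕ) (hl : ℓ ∣ Fintype.card F - 1)
    (ξ : F) (hξ : orderOf ξ = Fintype.card F - 1) (a : ℕ → F) (f : F → F)
    (hcyc : IsCycMap ℓ r ξ a f)
    (β γ δ : F) (hγ : γ ≠ 0) (hδ : δ ≠ 0) :
    ((((Finset.univ.erase (0 : F)).filter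
      (fun c => γ * c + δ ≠ 0 ∧ f c = β / (γ * c + δ))).card) : ℝ)
      < max (2 * (ℓ : ℝ)) (Real.sqrt (2 * (Fintype.card F : ℝ))) := by
  have hq : 0 < Fintype.card F - 1 := Nat.sub_pos_of_lt Fintype.one_lt_card
  obtain ⟨κ, hκ⟩ := exists_cosetIndex (Nat.pos_of_dvd_of_pos hl hq) hξ
  obtain ⟨d, hd⟩ := hl
  set S := (Finset.univ.erase (0 : F)).filter (fun c => γ * c + δ ≠ 0 ∧ f c = β / (γ * c + δ))
  have hS : ∀ c ∈ S, c ≠ 0 ∧ a (κ c) * (c ^ r * (γ * c + δ)) = β := by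
    intro c hc
    obtain ⟨⟨hc0, -⟩, hlin, hfc⟩ := by simpa only [S, mem_filter, mem_erase] using hc
    obtain ⟨hκc, y, hy, hcy⟩ := hκ c hc0
    rw [hcyc.apply_eq_mul_pow hκc hy hcy, eq_div_iff hlin] at hfc
    exact ⟨hc0, by rw [← hfc, mul_assoc]⟩
  have hpairs : #{p ∈ S.offDiag | κ p.1 = κ p.2} ≤ d :=
    card_sameCoset_offDiag_le hd.symm hγ hδ (fun x hx => ⟨(hS x hx).1, (hκ x (hS x hx).1).2⟩)
      fun x hx x' hx' hxx' => mul_left_cancel₀ (hcyc.2.1 _ (hκ x (hS x hx).1).1)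
        (by rw [(hS x hx).2, hxx', (hS x' hx').2])
  have hsq := sq_card_le_card_mul_card_add_card_offDiag_filter S (range ℓ)
    fun x hx => mem_range.2 (hκ x (hS x hx).1).1
  rw [card_range] at hsq
  refine natCast_lt_max_of_sq_lt (hsq.trans_lt ?_)
  calc ℓ * (#S + #{p ∈ S.offDiag | κ p.1 = κ p.2}) ≤ ℓ * #S + ℓ * d := by
        rw [mul_add]; gcongr
    _ < ℓ * #S + Fintype.card F := by omega

/-- If `f` is an `r`-th order cyclotomic mapping of index `ℓ ∣ q−1`
which permutes `F_q`, and `α = 0` while `β, γ, δ` are all nonzero, then the number `N`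
of `c ∈ F_q^*` with `γc+δ ≠ 0` and `f(c) = β/(γc+δ)` satisfies `N < max{2ℓ, (2q)^{1/2}}`. -/
theorem stmt8 {F : Type*} [Field F] [Fintype F] [DecidableEq F]
    (ℓ r : ℕ) (hl : ℓ ∣ Fintype.card F - 1) (hr : 1 ≤ r)
    (ξ : F) (hξ : orderOf ξ = Fintype.card F - 1) (a : ℕ → F) (f : F → F)
    (hcyc : IsCycMap ℓ r ξ a f) (hperm : Function.Bijective f)
    (β γ δ : F) (hβ : β ≠ 0) (hγ : γ ≠ 0) (hδ : δ ≠ 0) :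
    ((((Finset.univ.erase (0 : F)).filter
      (fun c => γ * c + δ ≠ 0 ∧ f c = β / (γ * c + δ))).card) : ℝ)
      < max (2 * (ℓ : ℝ)) (Real.sqrt (2 * (Fintype.card F : ℝ))) :=
  stmt8_general ℓ r hl ξ hξ a f hcyc β γ δ hγ hδ
end

section
/- Let p > 2 be a prime and let f be the unique polynomial over F_p of degree at most p−1 with f(0) = 0 and f(ξ^i) = i+1 for i = 0, 1, …, p−2, where ξ is a primitive element of F_p. Then deg(f) = p−2. -/
open Polynomial Finset

/-- The discrete logarithm polynomial `f` over `F_p` (`p > 2` prime),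
i.e. the unique polynomial of degree at most `p−1` with `f(0) = 0` and
`f(ξ^i) = i+1` for `0 ≤ i ≤ p−2`, has degree `p−2`. -/
theorem stmt9 {p : ℕ} [Fact p.Prime] (hp : 2 < p) (ξ : ZMod p)
    (hξ : orderOf ξ = p - 1) (f : Polynomial (ZMod p))
    (hdeg : f.degree ≤ ((p - 1 : ℕ) : WithBot ℕ)) (h0 : f.eval 0 = 0)
    (hval : ∀ i : ℕ, i ≤ p - 2 → f.eval (ξ ^ i) = (i : ZMod p) + 1) :
    f.natDegree = p - 2 := by
  have hp1 : 1 ≤ p := by omega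
  have hξ1 : ξ ≠ 1 := by
    intro h; rw [h, orderOf_one] at hξ; omega
  have hord : ξ ^ (p - 1) = 1 := by rw [← hξ]; exact pow_orderOf_eq_one ξ
  have hm1 : ((p - 1 : ℕ) : ZMod p) = -1 := by
    have h := ZMod.natCast_self p
    push_cast [Nat.cast_sub hp1]
    rw [h]; ring
  -- geometric power sums
  have geom : ∀ m : ℕ, ∑ i ∈ Finset.range (p - 1), ξ ^ (m * i)
      = if (p - 1) ∣ m then ((p - 1 : ℕ) : ZMod p) else 0 := by
    intro m
    simp only [pow_mul]
    by_cases hdvd : (p - 1) ∣ m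
    · have h1 : ξ ^ m = 1 := orderOf_dvd_iff_pow_eq_one.mp (hξ ▸ hdvd)
      simp [h1, hdvd]
    · have hne : ξ ^ m ≠ 1 := fun h => hdvd (hξ ▸ orderOf_dvd_of_pow_eq_one h)
      rw [geom_sum_eq hne, ← pow_mul, mul_comm, pow_mul, hord, one_pow]
      simp [hdvd]
  have hnd1 : f.natDegree ≤ p - 1 := Polynomial.natDegree_le_iff_degree_le.mpr hdeg
  have hnd : f.natDegree < p := by omega
  have hc0 : f.coeff 0 = 0 := by rw [Polynomial.coeff_zero_eq_eval_zero, h0]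
  -- key interchange identity
  have key : ∀ e : ℕ, ∑ i ∈ Finset.range (p - 1), f.eval (ξ ^ i) * ξ ^ (i * e)
      = ∑ j ∈ Finset.range p, f.coeff j *
          (if (p - 1) ∣ (j + e) then ((p - 1 : ℕ) : ZMod p) else 0) := by
    intro e
    have step1 : ∀ i : ℕ, f.eval (ξ ^ i) * ξ ^ (i * e)
        = ∑ j ∈ Finset.range p, f.coeff j * ξ ^ ((j + e) * i) := by
      intro i
      rw [Polynomial.eval_eq_sum_range' hnd, Finset.sum_mul]
      refine Finset.sum_congr rfl fun j _ => ?_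
      rw [← pow_mul, mul_assoc, ← pow_add]
      congr 1
      ring
    calc ∑ i ∈ Finset.range (p - 1), f.eval (ξ ^ i) * ξ ^ (i * e)
        = ∑ i ∈ Finset.range (p - 1), ∑ j ∈ Finset.range p,
            f.coeff j * ξ ^ ((j + e) * i) := Finset.sum_congr rfl fun i _ => step1 i
      _ = ∑ j ∈ Finset.range p, ∑ i ∈ Finset.range (p - 1),
            f.coeff j * ξ ^ ((j + e) * i) := Finset.sum_comm
      _ = ∑ j ∈ Finset.range p, f.coeff j *
            (if (p - 1) ∣ (j + e) then ((p - 1 : ℕ) : ZMod p) else 0) := by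
          refine Finset.sum_congr rfl fun j _ => ?_
          rw [← Finset.mul_sum, geom (j + e)]
  -- the sum of values: ∑ (i+1) = 0 in ZMod p
  have hgauss : ∑ i ∈ Finset.range (p - 1), ((i : ZMod p) + 1) = 0 := by
    have hnat : (∑ i ∈ Finset.range (p - 1), (i + 1)) * 2 = p * (p - 1) := by
      have h1 : ∑ i ∈ Finset.range (p - 1), (i + 1) = ∑ i ∈ Finset.range p, i := by
        have := Finset.sum_range_succ' (fun i => i) (p - 1)
        have hpe : p - 1 + 1 = p := by omega
        rw [hpe] at this
        simpa using this.symm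
      rw [h1, Finset.sum_range_id_mul_two]
    have h2 : ((2 : ℕ) : ZMod p) ≠ 0 := by
      rw [Ne, ZMod.natCast_eq_zero_iff]
      intro hd
      have := Nat.le_of_dvd (by norm_num) hd
      omega
    have hcast : (∑ i ∈ Finset.range (p - 1), ((i : ZMod p) + 1)) * ((2 : ℕ) : ZMod p) = 0 := by
      have : ((∑ i ∈ Finset.range (p - 1), (i + 1) : ℕ) : ZMod p) * ((2 : ℕ) : ZMod p) = 0 := by
        rw [← Nat.cast_mul, hnat, Nat.cast_mul, ZMod.natCast_self, zero_mul]
      rw [← this]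
      push_cast
      ring
    rcases mul_eq_zero.mp hcast with h | h
    · exact h
    · exact absurd h h2
  -- coefficient p-1 vanishes
  have hcoeff_top : f.coeff (p - 1) = 0 := by
    have hk := key 0
    have hL : ∑ i ∈ Finset.range (p - 1), f.eval (ξ ^ i) * ξ ^ (i * 0) = 0 := by
      simp only [Nat.mul_zero, pow_zero, mul_one]
      rw [Finset.sum_congr rfl fun i hi => hval i (by
        simp only [Finset.mem_range] at hi; omega)]
      exact hgauss
    have hR : ∑ j ∈ Finset.range p, f.coeff j *
        (if (p - 1) ∣ (j + 0) then ((p - 1 : ℕ) : ZMod p) else 0)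
        = f.coeff (p - 1) * ((p - 1 : ℕ) : ZMod p) := by
      have haux := Finset.sum_eq_single_of_mem (f := fun j => f.coeff j *
          (if (p - 1) ∣ (j + 0) then ((p - 1 : ℕ) : ZMod p) else 0))
          (p - 1) (Finset.mem_range.mpr (show p - 1 < p by omega))
          (fun j hj hjne => ?_)
      · rw [haux]
        simp only [if_pos (show (p - 1) ∣ (p - 1 + 0) from ⟨1, by omega⟩)]
      · simp only [Finset.mem_range] at hj
        by_cases hj0 : j = 0
        · subst hj0; simp only [hc0, zero_mul]
        · have hnd2 : ¬ (p - 1) ∣ (j + 0) := by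
            intro hd
            have := Nat.le_of_dvd (by omega) hd
            omega
          simp only [if_neg hnd2, mul_zero]
    rw [hL, hR, hm1] at hk
    have : f.coeff (p - 1) * (-1) = 0 := hk.symm
    simpa using this
  -- the weighted sum S and its nonvanishing
  set S : ZMod p := ∑ i ∈ Finset.range (p - 1), ((i : ZMod p) + 1) * ξ ^ i with hS
  have hSval : (1 - ξ) * S = 1 := by
    have hterm : ∀ i : ℕ, (1 - ξ) * (((i : ZMod p) + 1) * ξ ^ i)
        = ((((i : ℕ) : ZMod p) + 1) * ξ ^ i - (((i + 1 : ℕ) : ZMod p) + 1) * ξ ^ (i + 1))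
          + ξ ^ (i + 1) := by
      intro i
      push_cast
      ring
    rw [hS, Finset.mul_sum]
    rw [Finset.sum_congr rfl fun i _ => hterm i, Finset.sum_add_distrib]
    have htel : ∑ i ∈ Finset.range (p - 1),
        ((((i : ℕ) : ZMod p) + 1) * ξ ^ i - (((i + 1 : ℕ) : ZMod p) + 1) * ξ ^ (i + 1))
        = (((0 : ℕ) : ZMod p) + 1) * ξ ^ 0 - (((p - 1 : ℕ) : ZMod p) + 1) * ξ ^ (p - 1) :=
      Finset.sum_range_sub' (fun i => (((i : ℕ) : ZMod p) + 1) * ξ ^ i) (p - 1)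
    have hgeo1 : ∑ i ∈ Finset.range (p - 1), ξ ^ (i + 1) = 0 := by
      have h1 : ∑ i ∈ Finset.range (p - 1), ξ ^ (i + 1)
          = ξ * ∑ i ∈ Finset.range (p - 1), ξ ^ (1 * i) := by
        rw [Finset.mul_sum]
        refine Finset.sum_congr rfl fun i _ => ?_
        rw [one_mul, pow_succ]
        ring
      rw [h1, geom 1, if_neg (fun hd => by have := Nat.le_of_dvd one_pos hd; omega), mul_zero]
    rw [htel, hgeo1, hm1, hord]
    simp
  have hSne : S ≠ 0 := by
    intro h
    rw [h, mul_zero] at hSval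
    exact zero_ne_one hSval
  -- coefficient p-2 is -S ≠ 0
  have hcoeff2 : f.coeff (p - 2) ≠ 0 := by
    have hk := key 1
    have hL : ∑ i ∈ Finset.range (p - 1), f.eval (ξ ^ i) * ξ ^ (i * 1) = S := by
      rw [hS]
      refine Finset.sum_congr rfl fun i hi => ?_
      simp only [Finset.mem_range] at hi
      rw [hval i (by omega), Nat.mul_one]
    have hR : ∑ j ∈ Finset.range p, f.coeff j *
        (if (p - 1) ∣ (j + 1) then ((p - 1 : ℕ) : ZMod p) else 0)
        = f.coeff (p - 2) * ((p - 1 : ℕ) : ZMod p) := by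
      have haux := Finset.sum_eq_single_of_mem (f := fun j => f.coeff j *
          (if (p - 1) ∣ (j + 1) then ((p - 1 : ℕ) : ZMod p) else 0))
          (p - 2) (Finset.mem_range.mpr (show p - 2 < p by omega))
          (fun j hj hjne => ?_)
      · rw [haux]
        simp only [if_pos (show (p - 1) ∣ (p - 2 + 1) from ⟨1, by omega⟩)]
      · simp only [Finset.mem_range] at hj
        have hnd2 : ¬ (p - 1) ∣ (j + 1) := by
          rintro ⟨c, hc⟩
          have hcc0 : c ≠ 0 := by rintro rfl; omega
          have hcc1 : c ≠ 1 := by rintro rfl; omega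
          have h2 : (p - 1) * 2 ≤ (p - 1) * c := Nat.mul_le_mul_left _ (by omega)
          rw [← hc] at h2
          omega
        simp only [if_neg hnd2, mul_zero]
    rw [hL, hR, hm1] at hk
    intro h
    rw [h, zero_mul] at hk
    exact hSne hk
  -- conclude
  have hge : p - 2 ≤ f.natDegree := Polynomial.le_natDegree_of_ne_zero hcoeff2
  have hfne : f ≠ 0 := fun h => hcoeff2 (by rw [h]; simp)
  have hle : f.natDegree ≤ p - 2 := by
    by_contra hlt
    push_neg at hlt
    have heq : f.natDegree = p - 1 := by omega
    have := Polynomial.leadingCoeff_ne_zero.mpr hfne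
    rw [Polynomial.leadingCoeff, heq, hcoeff_top] at this
    exact this rfl
  omega
end

section
/- Let p > 2 be a prime and let f be the unique polynomial over F_p of degree at most p−1 with f(0) = 0 and f(ξ^i) = i+1 for i = 0, 1, …, p−2, where ξ is a primitive element of F_p. Then the weight w(f), i.e. the number of nonzero coefficients of f, equals p−2. -/
open Polynomial Finset

lemma aux_geom {K : Type*} [Field K] {w : K} (hw : w ≠ 1) {n : ℕ} (hwn : w ^ n = 1) :
    ∑ i ∈ range n, w ^ i = 0 := by
  rw [geom_sum_eq hw, hwn, sub_self, zero_div]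

lemma aux_key {K : Type*} [Field K] {w : K} (hw : w ≠ 1) {n : ℕ} (hwn : w ^ n = 1) :
    (w - 1) * ∑ i ∈ range n, ((i : K) + 1) * w ^ i = (n : K) := by
  rw [mul_sum]
  calc ∑ i ∈ range n, (w - 1) * (((i : K) + 1) * w ^ i)
      = ∑ i ∈ range n,
        ((((i + 1 : ℕ) : K) * w ^ (i + 1) - (i : K) * w ^ i) - w ^ i) := by
        refine Finset.sum_congr rfl fun i _ => ?_
        push_cast; ring
    _ = (∑ i ∈ range n, (((i + 1 : ℕ) : K) * w ^ (i + 1) - (i : K) * w ^ i))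
        - ∑ i ∈ range n, w ^ i := by rw [Finset.sum_sub_distrib]
    _ = (((n : ℕ) : K) * w ^ n - ((0 : ℕ) : K) * w ^ 0) - 0 := by
        rw [Finset.sum_range_sub (fun i => (i : K) * w ^ i), aux_geom hw hwn]
    _ = (n : K) := by rw [hwn]; push_cast; ring

/-- The discrete logarithm polynomial `f` over `F_p` (`p > 2` prime)
has weight (number of nonzero coefficients) equal to `p−2`. -/
theorem stmt10 {p : ℕ} [Fact p.Prime] (hp : 2 < p) (ξ : ZMod p)
    (hξ : orderOf ξ = p - 1) (f : Polynomial (ZMod p))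
    (hdeg : f.degree ≤ ((p - 1 : ℕ) : WithBot ℕ)) (h0 : f.eval 0 = 0)
    (hval : ∀ i : ℕ, i ≤ p - 2 → f.eval (ξ ^ i) = (i : ZMod p) + 1) :
    f.support.card = p - 2 := by
  set n := p - 1 with hn
  have hn2 : 2 ≤ n := by omega
  have hξn : ξ ^ n = 1 := by rw [← hξ]; exact pow_orderOf_eq_one ξ
  have hξ0 : ξ ≠ 0 := by
    intro h
    rw [h, zero_pow (by omega : n ≠ 0)] at hξn
    exact zero_ne_one hξn
  have hcast : ((n : ℕ) : ZMod p) = -1 := by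
    have h1 : (1 : ℕ) ≤ p := by omega
    have hps := ZMod.natCast_self p
    rw [hn, Nat.cast_sub h1, hps]
    push_cast; ring
  have hξne : ∀ m, 0 < m → m < n → ξ ^ m ≠ 1 := by
    intro m hm1 hm2 h
    have hd := orderOf_dvd_of_pow_eq_one h
    rw [hξ] at hd
    have := Nat.le_of_dvd hm1 hd
    omega
  have hinj : ∀ i < n, ∀ j < n, ξ ^ i = ξ ^ j → i = j := by
    intro i hi j hj h
    have h2 := pow_injOn_Iio_orderOf (x := ξ)
    rw [hξ] at h2
    exact h2 (Set.mem_Iio.mpr hi) (Set.mem_Iio.mpr hj) h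
  have hsurj : ∀ x : ZMod p, x ≠ 0 → ∃ j, j < n ∧ ξ ^ j = x := by
    intro x hx
    have himg : ((Finset.range n).image (ξ ^ ·)).card = n := by
      rw [Finset.card_image_of_injOn, Finset.card_range]
      intro a ha b hb h
      exact hinj a (Finset.mem_range.mp ha) b (Finset.mem_range.mp hb) h
    have hsub : (Finset.range n).image (ξ ^ ·) ⊆ Finset.univ.erase 0 := by
      intro y hy
      obtain ⟨j, hj, rfl⟩ := Finset.mem_image.mp hy
      exact Finset.mem_erase.mpr ⟨pow_ne_zero _ hξ0, Finset.mem_univ _⟩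
    have hcarde : (Finset.univ.erase (0 : ZMod p)).card = n := by
      rw [Finset.card_erase_of_mem (Finset.mem_univ _), Finset.card_univ, ZMod.card]
    have heq : (Finset.range n).image (ξ ^ ·) = Finset.univ.erase 0 :=
      Finset.eq_of_subset_of_card_le hsub (by rw [himg, hcarde])
    have hmem : x ∈ (Finset.range n).image (ξ ^ ·) := by
      rw [heq]; exact Finset.mem_erase.mpr ⟨hx, Finset.mem_univ _⟩
    obtain ⟨j, hj, hjx⟩ := Finset.mem_image.mp hmem
    exact ⟨j, Finset.mem_range.mp hj, hjx⟩
  set c : ℕ → ZMod p := fun k => -(∑ i ∈ range n, ((i : ZMod p) + 1) * (ξ ^ (n - k)) ^ i)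
    with hc
  set g : Polynomial (ZMod p) := ∑ k ∈ Finset.Icc 1 (n - 1), Polynomial.C (c k) * Polynomial.X ^ k
    with hg
  have hck : ∀ k, 1 ≤ k → k ≤ n - 1 → c k ≠ 0 := by
    intro k h1 h2 h
    have hw1 : ξ ^ (n - k) ≠ 1 := hξne _ (by omega) (by omega)
    have hwn : (ξ ^ (n - k)) ^ n = 1 := by
      rw [← pow_mul, mul_comm, pow_mul, hξn, one_pow]
    have hkey := aux_key hw1 hwn
    rw [hc] at h
    simp only [neg_eq_zero] at h
    rw [h, mul_zero] at hkey
    rw [hcast] at hkey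
    exact one_ne_zero (neg_eq_zero.mp hkey.symm)
  have hgcoeff : ∀ m, g.coeff m = if m ∈ Finset.Icc 1 (n - 1) then c m else 0 := by
    intro m
    rw [hg, Polynomial.finset_sum_coeff]
    simp only [Polynomial.coeff_C_mul, Polynomial.coeff_X_pow, mul_ite, mul_one, mul_zero]
    exact Finset.sum_ite_eq _ m c
  have hsupp : g.support = Finset.Icc 1 (n - 1) := by
    ext m
    rw [Polynomial.mem_support_iff, hgcoeff]
    constructor
    · intro h
      by_contra hm
      simp [hm] at h
    · intro hm
      rw [if_pos hm]
      exact hck m (Finset.mem_Icc.mp hm).1 (Finset.mem_Icc.mp hm).2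
  have hT : ∑ i ∈ range n, ((i : ZMod p) + 1) = 0 := by
    have hnat : (∑ i ∈ range n, (i + 1)) * 2 = p * n := by
      have h1 : ∑ i ∈ range n, (i + 1) = ∑ i ∈ range (n + 1), i := by
        rw [Finset.sum_range_succ' (fun i => i) n]
        simp
      rw [h1, Finset.sum_range_id_mul_two (n + 1), (by omega : n + 1 = p)]
    have hdvd : p ∣ ∑ i ∈ range n, (i + 1) := by
      have hd : p ∣ (∑ i ∈ range n, (i + 1)) * 2 := by rw [hnat]; exact Dvd.intro n rfl
      rcases (Fact.out : p.Prime).dvd_mul.mp hd with h | h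
      · exact h
      · exact absurd (Nat.le_of_dvd (by omega) h) (by omega)
    calc ∑ i ∈ range n, ((i : ZMod p) + 1) = ((∑ i ∈ range n, (i + 1) : ℕ) : ZMod p) := by
          push_cast; ring
      _ = 0 := (ZMod.natCast_eq_zero_iff _ _).mpr hdvd
  have heval : ∀ j, j < n → g.eval (ξ ^ j) = (j : ZMod p) + 1 := by
    intro j hj
    have hw : ∀ i k : ℕ, k ≤ n → (ξ ^ (n - k)) ^ i * (ξ ^ j) ^ k = (ξ ^ j * (ξ ^ i)⁻¹) ^ k := by
      intro i k hk
      have h1 : (ξ ^ (n - k)) ^ i * (ξ ^ i) ^ k = 1 := by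
        rw [← pow_mul, ← pow_mul, ← pow_add]
        have : (n - k) * i + i * k = n * i := by
          rw [Nat.sub_mul, mul_comm i k, Nat.sub_add_cancel (Nat.mul_le_mul_right i hk)]
        rw [this, pow_mul, hξn, one_pow]
      have h2 : (ξ ^ (n - k)) ^ i = ((ξ ^ i) ^ k)⁻¹ := eq_inv_of_mul_eq_one_left h1
      rw [h2, mul_pow, inv_pow]
      exact mul_comm _ _
    have hinner : ∀ i, i < n → ∑ k ∈ Finset.Icc 1 (n - 1), (ξ ^ j * (ξ ^ i)⁻¹) ^ k
        = if i = j then ((n - 1 : ℕ) : ZMod p) else -1 := by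
      intro i hi
      have hIcc : Finset.Icc 1 (n - 1) = Finset.Ico 1 n := by
        rw [← Finset.Ico_add_one_right_eq_Icc]
        congr 1
        omega
      by_cases hij : i = j
      · subst hij
        rw [if_pos rfl, mul_inv_cancel₀ (pow_ne_zero _ hξ0)]
        simp only [one_pow, Finset.sum_const, Nat.card_Icc, nsmul_eq_mul, mul_one]
        congr 1
      · rw [if_neg hij]
        have hw1 : ξ ^ j * (ξ ^ i)⁻¹ ≠ 1 := by
          intro h
          apply hij
          refine hinj i hi j hj ?_
          exact inv_injective (eq_inv_of_mul_eq_one_right h)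
        have hwn : (ξ ^ j * (ξ ^ i)⁻¹) ^ n = 1 := by
          rw [mul_pow, inv_pow, ← pow_mul, ← pow_mul, mul_comm j n, mul_comm i n,
            pow_mul, pow_mul, hξn, one_pow, one_pow, inv_one, mul_one]
        have hgeom := aux_geom hw1 hwn
        rw [Finset.range_eq_Ico,
          Finset.sum_eq_sum_Ico_succ_bot (by omega : 0 < n) (fun k => (ξ ^ j * (ξ ^ i)⁻¹) ^ k)]
          at hgeom
        rw [hIcc]
        have h01 : (0 : ℕ) + 1 = 1 := rfl
        rw [h01, pow_zero] at hgeom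
        linear_combination hgeom
    calc g.eval (ξ ^ j) = ∑ k ∈ Finset.Icc 1 (n - 1), c k * (ξ ^ j) ^ k := by
          rw [hg, Polynomial.eval_finset_sum]
          refine Finset.sum_congr rfl fun k _ => ?_
          rw [Polynomial.eval_mul, Polynomial.eval_C, Polynomial.eval_pow, Polynomial.eval_X]
      _ = ∑ k ∈ Finset.Icc 1 (n - 1),
            -∑ i ∈ range n, ((i : ZMod p) + 1) * (ξ ^ j * (ξ ^ i)⁻¹) ^ k := by
          refine Finset.sum_congr rfl fun k hk => ?_
          obtain ⟨hk1, hk2⟩ := Finset.mem_Icc.mp hk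
          rw [hc]
          simp only [neg_mul, Finset.sum_mul, neg_inj]
          refine Finset.sum_congr rfl fun i _ => ?_
          rw [mul_assoc, hw i k (by omega)]
      _ = -∑ i ∈ range n, ((i : ZMod p) + 1)
            * ∑ k ∈ Finset.Icc 1 (n - 1), (ξ ^ j * (ξ ^ i)⁻¹) ^ k := by
          rw [Finset.sum_neg_distrib, neg_inj, Finset.sum_comm]
          exact Finset.sum_congr rfl fun i _ => (Finset.mul_sum _ _ _).symm
      _ = -∑ i ∈ range n, ((i : ZMod p) + 1)
            * (if i = j then ((n - 1 : ℕ) : ZMod p) else -1) := by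
          rw [neg_inj]
          refine Finset.sum_congr rfl fun i hi => ?_
          rw [hinner i (Finset.mem_range.mp hi)]
      _ = (j : ZMod p) + 1 := by
          have hsplit : ∀ i : ℕ, ((i : ZMod p) + 1)
              * (if i = j then ((n - 1 : ℕ) : ZMod p) else -1)
              = ((i : ZMod p) + 1) * (-1)
                + (if i = j then ((i : ZMod p) + 1) * (((n - 1 : ℕ) : ZMod p) + 1) else 0) := by
            intro i
            by_cases h : i = j
            · rw [if_pos h, if_pos h]; ring
            · rw [if_neg h, if_neg h]; ring
          rw [Finset.sum_congr rfl fun i _ => hsplit i, Finset.sum_add_distrib,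
            Finset.sum_ite_eq', if_pos (Finset.mem_range.mpr hj), ← Finset.sum_mul, hT]
          have hn1 : ((n - 1 : ℕ) : ZMod p) + 1 = -1 := by
            have : ((n - 1 : ℕ) : ZMod p) + 1 = ((n - 1 + 1 : ℕ) : ZMod p) := by push_cast; ring
            rw [this, (by omega : n - 1 + 1 = n), hcast]
          rw [hn1]
          ring
  have hfg : f = g := by
    have hdf : f.natDegree ≤ p - 1 := Polynomial.natDegree_le_iff_degree_le.mpr hdeg
    have hdg : g.natDegree ≤ p - 1 := by
      rw [hg]
      apply Polynomial.natDegree_sum_le_of_forall_le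
      intro k hk
      refine le_trans (Polynomial.natDegree_C_mul_le _ _) ?_
      rw [Polynomial.natDegree_X_pow]
      have := (Finset.mem_Icc.mp hk).2
      omega
    have hzero : f - g = 0 := by
      apply Polynomial.eq_zero_of_natDegree_lt_card_of_eval_eq_zero' _ Finset.univ
      · intro x _
        rw [Polynomial.eval_sub]
        by_cases hx : x = 0
        · subst hx
          rw [h0, ← Polynomial.coeff_zero_eq_eval_zero, hgcoeff]
          simp
        · obtain ⟨j, hj, rfl⟩ := hsurj x hx
          rw [hval j (by omega), heval j hj, sub_self]
      · have h1 : (f - g).natDegree ≤ p - 1 :=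
          le_trans (Polynomial.natDegree_sub_le f g) (by omega)
        have h2 : (Finset.univ : Finset (ZMod p)).card = p := by
          rw [Finset.card_univ, ZMod.card]
        omega
    have := sub_eq_zero.mp hzero
    exact this
  rw [hfg, hsupp, Nat.card_Icc]
  omega
end

section
/- Let p > 2 be a prime, ξ a primitive element of F_p, and let f be the unique polynomial over F_p of degree at most p−1 with f(0) = 0 and f(ξ^i) = i+1 for i = 0, 1, …, p−2. Then f(c) = Σ_{i=1}^{p−2} (ξ^{−i} − 1)^{−1} c^i for all c ∈ F_p. -/
open Polynomial Finset

private lemma geomZero {p : ℕ} [Fact p.Prime] {y : ZMod p} (hy : y ≠ 1) (h : y ^ (p-1) = 1) :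
    ∑ t ∈ range (p-1), y ^ t = 0 := by
  rw [geom_sum_eq hy, h, sub_self, zero_div]

private lemma weightedSum {p : ℕ} [Fact p.Prime] (hp : 2 < p) {y : ZMod p} (hy : y ≠ 1)
    (h : y ^ (p-1) = 1) :
    ∑ t ∈ range (p-1), ((t : ZMod p)+1) * y ^ t = (1 - y)⁻¹ := by
  have hgeom : ∑ t ∈ range (p-1), y ^ t = 0 := geomZero hy h
  apply eq_inv_of_mul_eq_one_left
  rw [Finset.sum_mul]
  calc ∑ t ∈ range (p-1), ((((t : ZMod p)+1) * y ^ t) * (1-y))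
      = ∑ t ∈ range (p-1), ((((t : ℕ) : ZMod p)+1) * y ^ t - (((t+1 : ℕ) : ZMod p)+1) * y ^ (t+1) + y ^ (t+1)) := by
        refine Finset.sum_congr rfl fun t _ => ?_
        push_cast; ring
    _ = (((0:ℕ) : ZMod p)+1) * y ^ 0 - (((p-1 : ℕ) : ZMod p)+1) * y ^ (p-1) + ∑ t ∈ range (p-1), y ^ (t+1) := by
        rw [Finset.sum_add_distrib, Finset.sum_range_sub' (fun t => (((t:ℕ) : ZMod p)+1) * y ^ t)]
    _ = 1 := by
        have h2 : (((p-1 : ℕ) : ZMod p)+1) = 0 := by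
          have h3 : ((p-1 : ℕ) : ZMod p) + ((1:ℕ) : ZMod p) = ((p : ℕ) : ZMod p) := by
            have hps : p - 1 + 1 = p := by omega
            rw [← Nat.cast_add, hps]
          simpa using h3.trans (ZMod.natCast_self p)
        have h4 : ∑ t ∈ range (p-1), y ^ (t+1) = y * ∑ t ∈ range (p-1), y ^ t := by
          rw [Finset.mul_sum]; exact Finset.sum_congr rfl fun t _ => by ring
        rw [h2, h, h4, hgeom]; simp

private lemma splitSum {p : ℕ} (hp : 2 < p) (g : ℕ → ZMod p) :
    ∑ i ∈ range (p-1), g i = g 0 + ∑ i ∈ Icc 1 (p-2), g i := by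
  have h2 : Icc 1 (p-2) = Ico 1 (p-1) := by
    have h : p - 1 = (p-2) + 1 := by omega
    rw [h, Finset.Ico_add_one_right_eq_Icc]
  rw [Finset.range_eq_Ico, h2, Finset.sum_eq_sum_Ico_succ_bot (by omega : 0 < p - 1)]

private lemma sumTplusOne {p : ℕ} [Fact p.Prime] (hp : 2 < p) :
    ∑ t ∈ range (p-1), ((t : ZMod p)+1) = 0 := by
  have hN : (∑ t ∈ range (p-1), (t+1)) * 2 = p * (p-1) := by
    rw [Finset.sum_add_distrib]
    have hg := Finset.sum_range_id_mul_two (p-1)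
    have h1 : p - 1 - 1 = p - 2 := by omega
    rw [h1] at hg
    have h2 : ∑ _t ∈ range (p-1), 1 = p - 1 := by simp
    rw [h2, add_mul, hg]
    have h3 : p - 2 + 2 = p := by omega
    calc (p-1) * (p-2) + (p-1) * 2 = (p-1) * ((p-2) + 2) := by ring
      _ = p * (p-1) := by rw [h3]; ring
  have h0 : (∑ t ∈ range (p-1), ((t : ZMod p)+1)) * 2 = 0 := by
    have hc := congrArg (Nat.cast : ℕ → ZMod p) hN
    push_cast at hc
    rw [hc]; simp
  have h2ne : (2 : ZMod p) ≠ 0 := by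
    intro h
    have h' : ((2:ℕ) : ZMod p) = 0 := by exact_mod_cast h
    rw [ZMod.natCast_eq_zero_iff] at h'
    have := Nat.le_of_dvd (by norm_num) h'
    omega
  exact (mul_eq_zero.mp h0).resolve_right h2ne

private lemma mainSum {p : ℕ} [Fact p.Prime] (hp : 2 < p) {ξ : ZMod p}
    (hξ : orderOf ξ = p - 1) (j : ℕ) (hj : j ≤ p - 2) :
    ∑ i ∈ Icc 1 (p-2), ((ξ ^ i)⁻¹ - 1)⁻¹ * (ξ ^ j) ^ i = (j : ZMod p) + 1 := by
  have hord : ξ ^ (p-1) = 1 := hξ ▸ pow_orderOf_eq_one ξ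
  have hξ0 : ξ ≠ 0 := by
    intro h; rw [h, zero_pow (by omega : p - 1 ≠ 0)] at hord
    exact zero_ne_one hord
  -- step 1: rewrite coefficients via the weighted geometric sum
  have coeff : ∀ i ∈ Icc 1 (p-2), ((ξ ^ i)⁻¹ - 1)⁻¹ =
      -∑ t ∈ range (p-1), ((t : ZMod p)+1) * ((ξ^i)⁻¹) ^ t := by
    intro i hi
    rw [Finset.mem_Icc] at hi
    have hne1 : (ξ^i)⁻¹ ≠ 1 := by
      rw [Ne, inv_eq_one]
      intro h
      have hd := orderOf_dvd_of_pow_eq_one h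
      rw [hξ] at hd
      have := Nat.le_of_dvd (by omega) hd
      omega
    have hpow1 : ((ξ^i)⁻¹) ^ (p-1) = 1 := by
      rw [inv_pow, ← pow_mul, mul_comm, pow_mul, hord, one_pow, inv_one]
    rw [weightedSum hp hne1 hpow1]
    rw [show (ξ^i)⁻¹ - 1 = -(1 - (ξ^i)⁻¹) by ring, inv_neg]
  rw [Finset.sum_congr rfl (fun i hi => by rw [coeff i hi])]
  -- step 2: expand, swap sums, evaluate inner geometric sums
  have term : ∀ t i : ℕ, ((ξ^i)⁻¹) ^ t * (ξ^j)^i = (ξ^j * (ξ^t)⁻¹)^i := by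
    intro t i
    rw [inv_pow, ← pow_mul, mul_comm i t, pow_mul, ← inv_pow, mul_pow]
    ring
  have hjlt : j < p - 1 := by omega
  have key : ∀ a b : ℕ, a < b → b < p - 1 → ξ^a ≠ ξ^b := by
    intro a b hab hb h
    have h0 : ξ^a * ξ^(b-a) = ξ^a * 1 := by
      rw [mul_one, ← pow_add, show a + (b-a) = b by omega]
      exact h.symm
    have h1 : ξ^(b-a) = 1 := mul_left_cancel₀ (pow_ne_zero _ hξ0) h0
    have := Nat.le_of_dvd (by omega) (hξ ▸ orderOf_dvd_of_pow_eq_one h1)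
    omega
  have pow_inj : ∀ a b : ℕ, a < p-1 → b < p-1 → ξ^a = ξ^b → a = b := by
    intro a b ha hb hab
    rcases Nat.lt_trichotomy a b with h|h|h
    · exact absurd hab (key a b h hb)
    · exact h
    · exact absurd hab.symm (key b a h ha)
  calc ∑ i ∈ Icc 1 (p-2), (-∑ t ∈ range (p-1), ((t : ZMod p)+1) * ((ξ^i)⁻¹) ^ t) * (ξ^j)^i
      = ∑ i ∈ Icc 1 (p-2), ∑ t ∈ range (p-1), -(((t : ZMod p)+1) * (ξ^j * (ξ^t)⁻¹)^i) := by
        refine Finset.sum_congr rfl fun i _ => ?_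
        rw [neg_mul, Finset.sum_mul, ← Finset.sum_neg_distrib]
        refine Finset.sum_congr rfl fun t _ => ?_
        rw [mul_assoc, term t i]
    _ = ∑ t ∈ range (p-1), -(((t : ZMod p)+1) * ∑ i ∈ Icc 1 (p-2), (ξ^j * (ξ^t)⁻¹)^i) := by
        rw [Finset.sum_comm]
        refine Finset.sum_congr rfl fun t _ => ?_
        rw [Finset.sum_neg_distrib, ← Finset.mul_sum]
    _ = ∑ t ∈ range (p-1), -(((t : ZMod p)+1) * (-1 - if t = j then 1 else 0)) := by
        refine Finset.sum_congr rfl fun t ht => ?_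
        rw [Finset.mem_range] at ht
        congr 2
        by_cases htj : t = j
        · subst htj
          rw [if_pos rfl]
          have hζ : ξ^t * (ξ^t)⁻¹ = 1 := mul_inv_cancel₀ (pow_ne_zero _ hξ0)
          rw [hζ]
          simp only [one_pow, Finset.sum_const, Nat.card_Icc, smul_eq_mul, mul_one]
          have hc : p - 2 + 1 - 1 = p - 2 := by omega
          rw [hc]
          have h3 : ((p-2 : ℕ) : ZMod p) + ((2:ℕ) : ZMod p) = ((p : ℕ) : ZMod p) := by
            have hps : p - 2 + 2 = p := by omega
            rw [← Nat.cast_add, hps]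
          rw [ZMod.natCast_self] at h3
          push_cast at h3
          linear_combination h3
        · rw [if_neg htj]
          have hζne : ξ^j * (ξ^t)⁻¹ ≠ 1 := by
            intro h
            rw [mul_inv_eq_one₀ (pow_ne_zero _ hξ0)] at h
            exact htj (pow_inj j t hjlt ht h).symm
          have hζpow : (ξ^j * (ξ^t)⁻¹) ^ (p-1) = 1 := by
            rw [mul_pow, ← pow_mul, mul_comm j (p-1), pow_mul, hord, one_pow,
              inv_pow, ← pow_mul, mul_comm t (p-1), pow_mul, hord, one_pow, inv_one, mul_one]
          have hs := splitSum hp (fun i => (ξ^j * (ξ^t)⁻¹)^i)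
          have hg : ∑ i ∈ range (p-1), (ξ^j * (ξ^t)⁻¹)^i = 0 :=
            geomZero hζne hζpow
          simp only [pow_zero] at hs
          rw [hg] at hs
          linear_combination -hs
    _ = ∑ t ∈ range (p-1), (((t : ZMod p)+1) + (if t = j then ((t : ZMod p)+1) else 0)) := by
        refine Finset.sum_congr rfl fun t _ => ?_
        by_cases htj : t = j <;> simp [htj] <;> ring
    _ = (j : ZMod p) + 1 := by
        rw [Finset.sum_add_distrib, sumTplusOne hp, zero_add,
          Finset.sum_ite_eq' (range (p-1)) j (fun t => ((t : ZMod p)+1)),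
          if_pos (Finset.mem_range.mpr hjlt)]

/-- The discrete logarithm polynomial `f` over `F_p` (`p > 2` prime)
satisfies `f(c) = Σ_{i=1}^{p−2} (ξ^{−i} − 1)^{−1} c^i` for all `c ∈ F_p`. -/
theorem stmt11 {p : ℕ} [Fact p.Prime] (hp : 2 < p) (ξ : ZMod p)
    (hξ : orderOf ξ = p - 1) (f : Polynomial (ZMod p))
    (hdeg : f.degree ≤ ((p - 1 : ℕ) : WithBot ℕ)) (h0 : f.eval 0 = 0)
    (hval : ∀ i : ℕ, i ≤ p - 2 → f.eval (ξ ^ i) = (i : ZMod p) + 1) :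
    ∀ c : ZMod p, f.eval c = ∑ i ∈ Finset.Icc 1 (p - 2), ((ξ ^ i)⁻¹ - 1)⁻¹ * c ^ i := by
  intro c
  by_cases hc : c = 0
  · subst hc
    rw [h0]
    refine (Finset.sum_eq_zero fun i hi => ?_).symm
    rw [Finset.mem_Icc] at hi
    rw [zero_pow (by omega : i ≠ 0), mul_zero]
  · have hord : ξ ^ (p-1) = 1 := hξ ▸ pow_orderOf_eq_one ξ
    have hξ0 : ξ ≠ 0 := by
      intro h; rw [h, zero_pow (by omega : p - 1 ≠ 0)] at hord
      exact zero_ne_one hord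
    have hvu : IsUnit ξ := isUnit_iff_ne_zero.mpr hξ0
    have hv : (hvu.unit : ZMod p) = ξ := hvu.unit_spec
    have hvo : orderOf hvu.unit = p - 1 := by rw [← orderOf_units, hv, hξ]
    have hcard : Nat.card (ZMod p)ˣ = p - 1 := by
      rw [Nat.card_eq_fintype_card, ZMod.card_units_eq_totient, Nat.totient_prime Fact.out]
    have htop : Subgroup.zpowers hvu.unit = ⊤ := by
      apply Subgroup.eq_top_of_card_eq
      rw [Nat.card_eq_fintype_card, Fintype.card_zpowers, hvo, hcard]
    have hfin : IsOfFinOrder hvu.unit := by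
      rw [← orderOf_pos_iff, hvo]; omega
    have hcu : IsUnit c := isUnit_iff_ne_zero.mpr hc
    have hmem : hcu.unit ∈ Submonoid.powers hvu.unit :=
      hfin.mem_powers_iff_mem_zpowers.mpr (htop ▸ Subgroup.mem_top _)
    obtain ⟨n, hn⟩ := (Submonoid.mem_powers_iff _ _).mp hmem
    set j := n % (p-1) with hjdef
    have hj : j ≤ p - 2 := by
      have := Nat.mod_lt n (show 0 < p-1 by omega)
      omega
    have hvj : hvu.unit ^ j = hcu.unit := by
      rw [← hn, hjdef, ← hvo]
      exact pow_mod_orderOf hvu.unit n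
    have hcj : ξ ^ j = c := by
      have h1 := congrArg (Units.val) hvj
      rw [Units.val_pow_eq_pow_val, hv, hcu.unit_spec] at h1
      exact h1
    rw [← hcj, hval j hj, mainSum hp hξ j hj]
end

section
/- Let p > 3 be a prime and let f be the unique polynomial over F_p of degree at most p−1 with f(0) = 0 and f(ξ^i) = i+1 for i = 0, 1, …, p−2, where ξ is a primitive element of F_p. Then Ind(f) = p−1; that is, for every proper divisor ℓ of p−1 the map induced by f is not an r-th order cyclotomic mapping of index ℓ for any r and any coefficients a_0, …, a_{ℓ−1} ∈ F_p^*. -/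
open Polynomial Finset

/-- For `p > 3` prime, the discrete logarithm polynomial `f` over `F_p`
has index `Ind(f) = p−1`. -/
theorem stmt12 {p : ℕ} [Fact p.Prime] (hp : 3 < p) (ξ : ZMod p)
    (hξ : orderOf ξ = p - 1) (f : Polynomial (ZMod p))
    (hdeg : f.degree ≤ ((p - 1 : ℕ) : WithBot ℕ)) (h0 : f.eval 0 = 0)
    (hval : ∀ i : ℕ, i ≤ p - 2 → f.eval (ξ ^ i) = (i : ZMod p) + 1) :
    cycIndex (fun x => f.eval x) = p - 1 := by
  classical
  have hprime : p.Prime := Fact.out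
  have hcard : Fintype.card (ZMod p) = p := ZMod.card p
  have hξ0 : ξ ≠ 0 := by
    intro h
    have h1 : ξ ^ (p - 1) = 1 := hξ ▸ pow_orderOf_eq_one ξ
    rw [h, zero_pow (by omega)] at h1
    exact zero_ne_one h1
  have heval1 : f.eval 1 = 1 := by
    have := hval 0 (by omega)
    simpa using this
  -- the set defining cycIndex
  have hSdef : cycIndex (fun x => f.eval x) =
      sInf {ℓ | ℓ ∣ p - 1 ∧ ∃ r, 1 ≤ r ∧ ∃ ξ' : ZMod p,
        orderOf ξ' = p - 1 ∧ ∃ a : ℕ → ZMod p, IsCycMap ℓ r ξ' a (fun x => f.eval x)} := by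
    unfold cycIndex
    rw [hcard]
  set S : Set ℕ := {ℓ | ℓ ∣ p - 1 ∧ ∃ r, 1 ≤ r ∧ ∃ ξ' : ZMod p,
        orderOf ξ' = p - 1 ∧ ∃ a : ℕ → ZMod p, IsCycMap ℓ r ξ' a (fun x => f.eval x)} with hS
  have hmem : (p - 1) ∈ S := by
    refine ⟨dvd_rfl, 1, le_refl 1, ξ, hξ, fun i => f.eval (ξ ^ i) * (ξ ^ i)⁻¹, h0, ?_, ?_⟩
    · intro i hi
      have h1 : f.eval (ξ ^ i) = (i : ZMod p) + 1 := hval i (by omega)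
      have h2 : (ξ ^ i) ≠ 0 := pow_ne_zero _ hξ0
      have h3 : ((i : ZMod p) + 1) ≠ 0 := by
        have h4 : ((i + 1 : ℕ) : ZMod p) ≠ 0 := by
          rw [Ne, ZMod.natCast_eq_zero_iff]
          intro hdvd
          have := Nat.le_of_dvd (by omega) hdvd
          omega
        push_cast at h4
        exact h4
      show f.eval (ξ ^ i) * (ξ ^ i)⁻¹ ≠ 0
      rw [h1]
      exact mul_ne_zero h3 (inv_ne_zero h2)
    · intro i hi y hy
      have hy1 : y ^ (p - 1) = 1 := ZMod.pow_card_sub_one_eq_one hy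
      have h2 : (ξ ^ i) ≠ 0 := pow_ne_zero _ hξ0
      simp only [hy1, mul_one, pow_one]
      rw [inv_mul_cancel_right₀ h2]
  have hall : ∀ ℓ ∈ S, ℓ = p - 1 := by
    intro ℓ hℓ
    obtain ⟨hdvd, r, hr, ξ', hξ', a, hf0, ha, hcos⟩ := hℓ
    have hℓpos : 0 < ℓ := Nat.pos_of_dvd_of_pos hdvd (by omega)
    by_contra hne
    have hℓle : ℓ ≤ p - 1 := Nat.le_of_dvd (by omega) hdvd
    have hℓlt : ℓ ≤ p - 2 := by omega
    have key : ∀ y : ZMod p, y ≠ 0 → f.eval (y ^ ℓ) = a 0 * (y ^ ℓ) ^ r := by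
      intro y hy
      have := hcos 0 hℓpos y hy
      simpa using this
    have ha0 : a 0 = 1 := by
      have h1 := key 1 one_ne_zero
      rw [one_pow, one_pow, mul_one, heval1] at h1
      exact h1.symm
    have hA : ξ ^ (ℓ * r) = (ℓ : ZMod p) + 1 := by
      have h1 := key ξ hξ0
      rw [ha0, one_mul, ← pow_mul] at h1
      rw [← h1]
      exact (hval ℓ hℓlt).symm ▸ rfl
    have hB : f.eval (ξ ^ (2 * ℓ)) = ((ℓ : ZMod p) + 1) ^ 2 := by
      have h1 := key (ξ ^ 2) (pow_ne_zero _ hξ0)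
      rw [ha0, one_mul, ← pow_mul] at h1
      have h2 : ((ξ ^ (2 * ℓ)) : ZMod p) ^ r = (ξ ^ (ℓ * r)) ^ 2 := by
        rw [← pow_mul, ← pow_mul]
        congr 1
        ring
      rw [h2, hA] at h1
      exact h1
    -- now case on 2ℓ vs p-1
    have h2ℓ : 2 * ℓ ≤ p - 1 := by
      obtain ⟨k, hk⟩ := hdvd
      have hk2 : 2 ≤ k := by
        rcases k with _ | _ | k
        · omega
        · omega
        · omega
      calc 2 * ℓ = ℓ * 2 := by ring
        _ ≤ ℓ * k := Nat.mul_le_mul_left ℓ hk2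
        _ = p - 1 := hk.symm
    rcases Nat.lt_or_ge (2 * ℓ) (p - 1) with hlt | hge
    · -- 2ℓ ≤ p - 2
      have hC : f.eval (ξ ^ (2 * ℓ)) = ((2 * ℓ : ℕ) : ZMod p) + 1 := hval (2 * ℓ) (by omega)
      rw [hB] at hC
      have hsq : ((ℓ : ZMod p)) ^ 2 = 0 := by
        push_cast at hC
        linear_combination hC
      have hz : (ℓ : ZMod p) = 0 := by
        exact pow_eq_zero_iff (by norm_num) |>.mp hsq
      rw [ZMod.natCast_eq_zero_iff] at hz
      have := Nat.le_of_dvd hℓpos hz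
      omega
    · -- 2ℓ = p - 1
      have heq : 2 * ℓ = p - 1 := by omega
      have hx : ξ ^ (2 * ℓ) = 1 := by
        rw [heq, ← hξ]
        exact pow_orderOf_eq_one ξ
      rw [hx, heval1] at hB
      have h2L : 2 * (ℓ : ZMod p) = -1 := by
        have h1 : ((2 * ℓ : ℕ) : ZMod p) = ((p - 1 : ℕ) : ZMod p) := by rw [heq]
        have h2 : ((p - 1 : ℕ) : ZMod p) = -1 := by
          rw [Nat.cast_sub (by omega), ZMod.natCast_self]
          ring
        push_cast at h1
        rw [h2] at h1
        exact h1
      have h3 : (3 : ZMod p) = 0 := by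
        linear_combination (2 * (ℓ : ZMod p) + 3) * h2L + 4 * hB
      have h4 : ((3 : ℕ) : ZMod p) = 0 := by exact_mod_cast h3
      rw [ZMod.natCast_eq_zero_iff] at h4
      have := Nat.le_of_dvd (by norm_num) h4
      omega
  rw [hSdef]
  have hne : S.Nonempty := ⟨p - 1, hmem⟩
  have := Nat.sInf_mem hne
  exact hall _ this
end

section
/- Let p > 2 be a prime and let f be the unique polynomial over F_p of degree at most p−1 with f(0) = 0 and f(ξ^i) = i+1 for i = 0, 1, …, p−2, where ξ is a primitive element of F_p. Then the invertibility satisfies I(f) < 2(p−2)^{1/2} + 1. -/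
/-!
Write the nonzero `x` as `ξ ^ i` with `0 ≤ i ≤ p - 2`; then `f x = c / x` says `(i + 1) ξ ^ i = c`.
If `i < j = i + d` are two such exponents, dividing the two equations gives
`i + 1 = (i + 1 + d) ξ ^ d`, and since `ξ ^ d ≠ 1` this determines `i` (mod `p`, hence exactly)
from the gap `d`. So the ordered pairs of distinct solutions have pairwise distinct differences
`j - i ∈ [-(p - 2), p - 2] \ {0}`, whence `N (N - 1) ≤ 2 (p - 2)` for the number `N` of solutions,
and `N ≤ 1 + √(2 (p - 2)) < 1 + 2 √(p - 2)`.
-/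

open Polynomial Finset

/-- The exponents `i < n` for which `x = ξ ^ i` solves `x * f x = c` when `f (ξ ^ i) = i + 1`. -/
def solutionExponents {F : Type*} [Field F] [DecidableEq F] (ξ c : F) (n : ℕ) : Finset ℕ :=
  (range n).filter fun i => ((i : F) + 1) * ξ ^ i = c

lemma card_mul_card_sub_one_le_of_injOn_sub {T : Finset ℕ} {m : ℕ} (hT : ∀ i ∈ T, i < m)
    (hinj : Set.InjOn (fun q : ℕ × ℕ => (q.2 : ℤ) - q.1) T.offDiag) :
    #T * (#T - 1) ≤ 2 * (m - 1) := by
  have hmaps : Set.MapsTo (fun q : ℕ × ℕ => (q.2 : ℤ) - q.1) T.offDiag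
      ((Icc (-((m : ℤ) - 1)) ((m : ℤ) - 1)).erase 0) := by
    rintro ⟨i, j⟩ hq
    obtain ⟨hi, hj, hij⟩ := mem_offDiag.mp hq
    have := hT i hi
    have := hT j hj
    simp only [coe_erase, Set.mem_sdiff, coe_Icc, Set.mem_Icc, Set.mem_singleton_iff]
    omega
  calc #T * (#T - 1) = #T.offDiag := by rw [offDiag_card, Nat.mul_sub_one]
    _ ≤ #((Icc (-((m : ℤ) - 1)) ((m : ℤ) - 1)).erase 0) := card_le_card_of_injOn _ hmaps hinj
    _ = 2 * (m - 1) := by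
      rcases Nat.eq_zero_or_pos m with rfl | hm
      · simp
      · rw [card_erase_of_mem (mem_Icc.mpr ⟨by omega, by omega⟩), Int.card_Icc]
        omega

section Field

variable {F : Type*} [Field F] {ξ c : F}

lemma ne_zero_of_orderOf_eq_card_sub_one [Fintype F] (hξ : orderOf ξ = Fintype.card F - 1) :
    ξ ≠ 0 :=
  have := Fintype.one_lt_card (α := F)
  (orderOf_pos_iff.mp (by omega)).isUnit.ne_zero

lemma injOn_pow_range_card_sub_one [Fintype F] (hξ : orderOf ξ = Fintype.card F - 1) :
    Set.InjOn (ξ ^ ·) (range (Fintype.card F - 1) : Set ℕ) := by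
  rw [← hξ, coe_range]
  exact pow_injOn_Iio_orderOf

variable [DecidableEq F]

lemma mem_solutionExponents_lt {n i : ℕ} (hi : i ∈ solutionExponents ξ c n) : i < n :=
  mem_range.mp (mem_filter.mp hi).1

lemma natCast_add_one_eq_of_mem_solutionExponents {n i d : ℕ} (hξ : ξ ≠ 0)
    (hi : i ∈ solutionExponents ξ c n) (hj : i + d ∈ solutionExponents ξ c n) :
    (i : F) + 1 = ((i : F) + d + 1) * ξ ^ d := by
  simp only [solutionExponents, mem_filter] at hi hj
  apply mul_right_cancel₀ (pow_ne_zero i hξ)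
  rw [hi.2, ← hj.2]
  push_cast
  ring

lemma natCast_eq_of_mem_solutionExponents {n i i' d : ℕ} (hξ : ξ ≠ 0) (hd : ξ ^ d ≠ 1)
    (hi : i ∈ solutionExponents ξ c n) (hj : i + d ∈ solutionExponents ξ c n)
    (hi' : i' ∈ solutionExponents ξ c n) (hj' : i' + d ∈ solutionExponents ξ c n) :
    (i : F) = i' := by
  have h := natCast_add_one_eq_of_mem_solutionExponents hξ hi hj
  have h' := natCast_add_one_eq_of_mem_solutionExponents hξ hi' hj'
  have hprod : ((i : F) - i') * (1 - ξ ^ d) = 0 := by linear_combination h - h'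
  rcases mul_eq_zero.mp hprod with hzero | hone
  · exact sub_eq_zero.mp hzero
  · exact absurd (sub_eq_zero.mp hone).symm hd

lemma eq_of_mem_solutionExponents (p : ℕ) [CharP F p] {n i i' d : ℕ} (hnξ : n ≤ orderOf ξ)
    (hnp : n ≤ p) (hd : d ≠ 0)
    (hi : i ∈ solutionExponents ξ c n) (hj : i + d ∈ solutionExponents ξ c n)
    (hi' : i' ∈ solutionExponents ξ c n) (hj' : i' + d ∈ solutionExponents ξ c n) :
    i = i' := by
  have hin := mem_solutionExponents_lt hi
  have hin' := mem_solutionExponents_lt hi'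
  have hdn := mem_solutionExponents_lt hj
  have hξ : ξ ≠ 0 := (orderOf_pos_iff.mp (by omega)).isUnit.ne_zero
  have hξd : ξ ^ d ≠ 1 := pow_ne_one_of_lt_orderOf hd (by omega)
  exact ((CharP.natCast_eq_natCast F p).mp
    (natCast_eq_of_mem_solutionExponents hξ hξd hi hj hi' hj')).eq_of_lt_of_lt (by omega) (by omega)

lemma injOn_sub_offDiag_solutionExponents (p : ℕ) [CharP F p] {n : ℕ} (hnξ : n ≤ orderOf ξ)
    (hnp : n ≤ p) :
    Set.InjOn (fun q : ℕ × ℕ => (q.2 : ℤ) - q.1) (solutionExponents ξ c n).offDiag := by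
  rintro ⟨i, j⟩ hq ⟨i', j'⟩ hq' hdiff
  simp only [coe_offDiag, Set.mem_offDiag, mem_coe] at hq hq'
  obtain ⟨hi, hj, hij⟩ := hq
  obtain ⟨hi', hj', hij'⟩ := hq'
  simp only at hdiff
  rcases Nat.lt_or_gt_of_ne hij with hlt | hgt
  · obtain ⟨d, rfl⟩ := Nat.exists_eq_add_of_lt hlt
    obtain rfl : j' = i' + (d + 1) := by omega
    obtain rfl := eq_of_mem_solutionExponents p hnξ hnp d.succ_ne_zero hi hj hi' hj'
    rfl
  · obtain ⟨d, rfl⟩ := Nat.exists_eq_add_of_lt hgt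
    obtain rfl : i' = j' + (d + 1) := by omega
    obtain rfl := eq_of_mem_solutionExponents p hnξ hnp d.succ_ne_zero hj hi hj' hi'
    rfl

section Fintype

variable [Fintype F]

lemma image_pow_range_eq_univ_erase_zero (hξ : orderOf ξ = Fintype.card F - 1) :
    (range (Fintype.card F - 1)).image (ξ ^ ·) = univ.erase 0 := by
  have hξ0 := ne_zero_of_orderOf_eq_card_sub_one hξ
  apply eq_of_subset_of_card_le
  · intro y hy
    obtain ⟨i, -, rfl⟩ := mem_image.mp hy
    exact mem_erase.mpr ⟨pow_ne_zero i hξ0, mem_univ _⟩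
  · rw [card_erase_of_mem (mem_univ 0), card_image_of_injOn (injOn_pow_range_card_sub_one hξ),
      card_range, card_univ]

lemma card_filter_eq_div_eq_card_solutionExponents
    (hξ : orderOf ξ = Fintype.card F - 1) {g : F → F}
    (hg : ∀ i < Fintype.card F - 1, g (ξ ^ i) = i + 1) (c : F) :
    #{x ∈ univ.erase 0 | g x = c / x} = #(solutionExponents ξ c (Fintype.card F - 1)) := by
  rw [← image_pow_range_eq_univ_erase_zero hξ, filter_image, card_image_of_injOn]
  · congr 1
    refine filter_congr fun i hi => ?_
    rw [hg i (mem_range.mp hi), eq_div_iff (pow_ne_zero i (ne_zero_of_orderOf_eq_card_sub_one hξ))]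
  · exact (injOn_pow_range_card_sub_one hξ).mono (coe_subset.mpr (filter_subset _ _))

end Fintype

end Field

lemma natCast_lt_two_mul_sqrt_add_one {N m : ℕ} (hm : 1 ≤ m) (h : N * (N - 1) ≤ 2 * m) :
    (N : ℝ) < 2 * √(m : ℝ) + 1 := by
  have hm' : (1 : ℝ) ≤ m := by exact_mod_cast hm
  have hsq : ((N : ℝ) - 1) ^ 2 ≤ 2 * m + 1 := by
    rcases N with _ | N
    · norm_num
    · have h' : ((N + 1 : ℕ) : ℝ) * N ≤ 2 * m := by exact_mod_cast h
      push_cast at h' ⊢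
      nlinarith
  have := Real.lt_sqrt_of_sq_lt (x := ((N : ℝ) - 1) / 2) (y := m) (by nlinarith)
  linarith

theorem stmt14_general {p : ℕ} [Fact p.Prime] (hp : 2 < p) (ξ : ZMod p)
    (hξ : orderOf ξ = p - 1) (f : Polynomial (ZMod p))
    (hval : ∀ i : ℕ, i ≤ p - 2 → f.eval (ξ ^ i) = (i : ZMod p) + 1) :
    (invertibility (fun x => f.eval x) : ℝ) < 2 * Real.sqrt ((p : ℝ) - 2) + 1 := by
  have hcard : Fintype.card (ZMod p) - 1 = p - 1 := by rw [ZMod.card]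
  obtain ⟨c, -, hc⟩ := exists_mem_eq_sup (univ.erase (0 : ZMod p)) ⟨1, by simp⟩
    fun c => #{x ∈ univ.erase 0 | f.eval x = c / x}
  have hI : invertibility (fun x => f.eval x) = #(solutionExponents ξ c (p - 1)) := by
    rw [invertibility, hc, card_filter_eq_div_eq_card_solutionExponents (hξ.trans hcard.symm)
      (fun i hi => hval i (by omega)), hcard]
  have hbound := card_mul_card_sub_one_le_of_injOn_sub (fun _ => mem_solutionExponents_lt)
    (injOn_sub_offDiag_solutionExponents (c := c) p hξ.ge (Nat.sub_le p 1))
  rw [hI, show (p : ℝ) - 2 = ((p - 2 : ℕ) : ℝ) by rw [Nat.cast_sub hp.le, Nat.cast_ofNat]]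
  exact natCast_lt_two_mul_sqrt_add_one (by omega) (by omega)

/-- The discrete logarithm polynomial `f` over `F_p` (`p > 2` prime)
satisfies `I(f) < 2(p−2)^{1/2} + 1`. -/
theorem stmt14 {p : ℕ} [Fact p.Prime] (hp : 2 < p) (ξ : ZMod p)
    (hξ : orderOf ξ = p - 1) (f : Polynomial (ZMod p))
    (hdeg : f.degree ≤ ((p - 1 : ℕ) : WithBot ℕ)) (h0 : f.eval 0 = 0)
    (hval : ∀ i : ℕ, i ≤ p - 2 → f.eval (ξ ^ i) = (i : ZMod p) + 1) :
    (invertibility (fun x => f.eval x) : ℝ) < 2 * Real.sqrt ((p : ℝ) - 2) + 1 :=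
  stmt14_general hp ξ hξ f hval
end
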